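/- arXiv:1602.03612 — 5 statements merged into one kernel-verified Lean document; each statement's English description precedes it below -/
import Mathlib

section
/- (Representation Theorem) A positive measurable function L on (0,c] is slowly varying at 0 if and only if there exist a measurable function η on (0,c] with lim_{t→0⁺} η(t) = η₀ ∈ (0,∞) and a continuous function ε on (0,c] with lim_{t→0⁺} ε(t) = 0, such that L(t) = η(t)·exp(∫_t^c ε(r)/r dr) for all 0 < t ≤ c. -/
/-!
Substituting `t = c e^{-x}` turns slow variation of `L` at `0` into `h (x + u) - h x → 0` for
`h x = log L (c e^{-x})`, and the representation into `h x = ρ x + ∫₀ˣ ε` with `ρ` convergent and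
`ε → 0`; the converse direction is then immediate. For the forward direction, the uniform
convergence theorem (Steinhaus' argument: the parameters `v ∈ [0, 3]` at which the increments along
a sequence stay small eventually fill most of `[0, 3]`, and two such sets shifted against each
other still meet) makes `h` locally bounded near `∞` and shows that its moving average
`b x = ∫ₓˣ⁺¹ h` differs from `h` by `o(1)`. Averaging once more gives a `C¹` function, differing
from `h` by `o(1)`, whose derivative `b (x + 1) - b x` is continuous and tends to `0`.
-/

open Filter Set intervalIntegral

open MeasureTheory Topology

theorem tendsto_measure_inter_setOf_forall_ge_abs_le {α : Type*} [MeasurableSpace α]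
    (μ : Measure α) {F : ℕ → α → ℝ} {s : Set α}
    (hF : ∀ v ∈ s, Tendsto (fun m => F m v) atTop (𝓝 0)) {δ : ℝ} (hδ : 0 < δ) :
    Tendsto (fun N => μ (s ∩ {v | ∀ m ≥ N, |F m v| ≤ δ})) atTop (𝓝 (μ s)) := by
  have hmono : Monotone fun N => s ∩ {v | ∀ m ≥ N, |F m v| ≤ δ} :=
    fun N N' hN => inter_subset_inter_right _ fun v hv m hm => hv m (hN.trans hm)
  have hunion : ⋃ N, s ∩ {v | ∀ m ≥ N, |F m v| ≤ δ} = s := by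
    refine Subset.antisymm (iUnion_subset fun _ => inter_subset_left) fun v hv => ?_
    obtain ⟨N, hN⟩ := eventually_atTop.1 ((hF v hv).eventually (Metric.closedBall_mem_nhds 0 hδ))
    exact mem_iUnion.2 ⟨N, hv, fun m hm => by simpa using hN m hm⟩
  have := tendsto_measure_iUnion_atTop (μ := μ) hmono
  rwa [hunion] at this

section UniformConvergence

variable {h : ℝ → ℝ}

theorem tendsto_add_sub_of_tendsto_atTop (hm : Measurable h)
    (hp : ∀ u, Tendsto (fun x => h (x + u) - h x) atTop (𝓝 0))
    {x u : ℕ → ℝ} (hx : Tendsto x atTop atTop) (hu : ∀ n, u n ∈ Icc (0 : ℝ) 1) :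
    Tendsto (fun n => h (x n + u n) - h (x n)) atTop (𝓝 0) := by
  rw [Metric.tendsto_nhds]
  intro δ hδ
  set S : (ℕ → ℝ) → ℕ → Set ℝ :=
    fun y N => Icc 0 3 ∩ {v | ∀ m ≥ N, |h (y m + v) - h (y m)| ≤ δ / 3}
  have hlarge : ∀ y : ℕ → ℝ, Tendsto y atTop atTop → ∀ᶠ N in atTop, 2 < volume (S y N) := by
    intro y hy
    have h3 := tendsto_measure_inter_setOf_forall_ge_abs_le volume (s := Icc (0 : ℝ) 3)
      (fun v _ => (hp v).comp hy) (by positivity : 0 < δ / 3)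
    rw [Real.volume_Icc] at h3
    exact h3.eventually (eventually_gt_nhds (by norm_num))
  have hxu : Tendsto (fun n => x n + u n) atTop atTop :=
    tendsto_atTop_mono (fun n => le_add_of_nonneg_right (hu n).1) hx
  filter_upwards [hlarge x hx, hlarge _ hxu] with N hA hB
  -- `S x N` and the translate of `S (x + u) N` by `u N` lie in `[0, 4]` and have measure
  -- more than `2`, so they meet.
  have hmeas : MeasurableSet (S (fun n => x n + u n) N) := by
    refine measurableSet_Icc.inter ?_
    simp only [ofPred_forall]
    exact .iInter fun m => .iInter fun _ => measurableSet_le (by fun_prop) measurable_const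
  have hvol : volume ((· + -u N) ⁻¹' S (fun n => x n + u n) N) =
      volume (S (fun n => x n + u n) N) :=
    measure_preimage_add_right volume (-u N) _
  obtain ⟨v, hvA, hvT⟩ := nonempty_inter_of_measure_lt_add volume (s := S x N)
    (hmeas.preimage (measurable_add_const (-u N))) (u := Icc 0 4)
    (fun v hv => ⟨hv.1.1, hv.1.2.trans (by norm_num)⟩)
    (fun v hv => ⟨by linarith [hv.1.1, (hu N).1], by linarith [hv.1.2, (hu N).2]⟩)
    (by rw [hvol, Real.volume_Icc, show ENNReal.ofReal (4 - 0) = 2 + 2 by norm_num]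
        exact ENNReal.add_lt_add hA hB)
  have h1 : |h (x N + v) - h (x N)| ≤ δ / 3 := hvA.2 N le_rfl
  have h2 : |h (x N + u N + (v + -u N)) - h (x N + u N)| ≤ δ / 3 := hvT.2 N le_rfl
  rw [show x N + u N + (v + -u N) = x N + v by ring, abs_sub_comm] at h2
  rw [Real.dist_eq, sub_zero]
  calc |h (x N + u N) - h (x N)|
      ≤ |h (x N + u N) - h (x N + v)| + |h (x N + v) - h (x N)| := abs_sub_le _ _ _
    _ < δ := by linarith

theorem tendstoUniformlyOn_add_sub_iff :
    TendstoUniformlyOn (fun x u => h (x + u) - h x) 0 atTop (Icc 0 1) ↔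
      ∀ δ > 0, ∀ᶠ x in atTop, ∀ u ∈ Icc (0 : ℝ) 1, |h (x + u) - h x| ≤ δ := by
  simp only [Metric.tendstoUniformlyOn_iff, Pi.zero_apply, dist_zero_left, Real.norm_eq_abs]
  refine ⟨fun H δ hδ => (H δ hδ).mono fun x hx u hu => (hx u hu).le, fun H δ hδ => ?_⟩
  filter_upwards [H (δ / 2) (half_pos hδ)] with x hx u hu
  linarith [hx u hu]

/-- The uniform convergence theorem. -/
theorem tendstoUniformlyOn_add_sub (hm : Measurable h)
    (hp : ∀ u, Tendsto (fun x => h (x + u) - h x) atTop (𝓝 0)) :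
    TendstoUniformlyOn (fun x u => h (x + u) - h x) 0 atTop (Icc 0 1) := by
  rw [Metric.tendstoUniformlyOn_iff]
  by_contra! hcon
  obtain ⟨δ, hδ, hfreq⟩ := hcon
  obtain ⟨x, hx, hxu⟩ := exists_seq_forall_of_frequently hfreq
  choose u hu hbig using hxu
  obtain ⟨n, hn⟩ := ((tendsto_add_sub_of_tendsto_atTop hm hp hx hu).eventually
    (Metric.ball_mem_nhds 0 hδ)).exists
  exact (hbig n).not_gt (by simpa [dist_comm] using hn)

theorem abs_sub_le_natCast_of_forall_Icc {X : ℝ}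
    (hX : ∀ x ≥ X, ∀ u ∈ Icc (0 : ℝ) 1, |h (x + u) - h x| ≤ 1) (n : ℕ) :
    ∀ y ∈ Icc X (X + n), |h y - h X| ≤ n := by
  induction n with
  | zero =>
    intro y hy
    simp [le_antisymm (by simpa using hy.2) hy.1]
  | succ n ih =>
    intro y hy
    rcases le_or_gt y (X + n) with hyn | hyn
    · push_cast
      linarith [ih y ⟨hy.1, hyn⟩]
    · have hstep := hX (X + n) (by linarith [n.cast_nonneg (α := ℝ)]) (y - (X + n))
        ⟨by linarith, by push_cast at hy; linarith [hy.2]⟩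
      rw [add_sub_cancel] at hstep
      have := ih (X + n) ⟨by linarith [n.cast_nonneg (α := ℝ)], le_rfl⟩
      push_cast
      calc |h y - h X| ≤ |h y - h (X + n)| + |h (X + n) - h X| := abs_sub_le _ _ _
        _ ≤ 1 + n := add_le_add hstep this
        _ = n + 1 := add_comm _ _

theorem intervalIntegrable_comp_max (hm : Measurable h) {X : ℝ}
    (hX : ∀ x ≥ X, ∀ u ∈ Icc (0 : ℝ) 1, |h (x + u) - h x| ≤ 1) (a b : ℝ) :
    IntervalIntegrable (fun x => h (max x X)) volume a b := by
  obtain ⟨n, hn⟩ := exists_nat_ge (max a b - X)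
  refine (Measure.integrableOn_of_bounded (M := |h X| + n) measure_Icc_lt_top.ne
    (hm.comp (measurable_id.max measurable_const)).aestronglyMeasurable
    (ae_restrict_of_forall_mem measurableSet_Icc fun y hy => ?_)).intervalIntegrable
  have hmem : max y X ∈ Icc X (X + n) :=
    ⟨le_max_right _ _, max_le (by linarith [hy.2]) (by linarith [n.cast_nonneg (α := ℝ)])⟩
  have := abs_sub_le_natCast_of_forall_Icc hX n _ hmem
  change |h (max y X)| ≤ _
  linarith [abs_sub_abs_le_abs_sub (h (max y X)) (h X)]

end UniformConvergence

theorem abs_integral_zero_one_le {G : ℝ → ℝ} {C : ℝ} (hG : ∀ u ∈ Icc (0 : ℝ) 1, |G u| ≤ C) :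
    |∫ u in (0 : ℝ)..1, G u| ≤ C := by
  simpa using norm_integral_le_of_norm_le_const (a := 0) (b := 1) (f := G)
    fun u hu => hG u (Ioc_subset_Icc_self (by simpa using hu))

section MovingAverage

variable {f : ℝ → ℝ}

noncomputable def movingAverage (f : ℝ → ℝ) (x : ℝ) : ℝ := ∫ t in x..x + 1, f t

theorem movingAverage_eq_integral_comp_add (f : ℝ → ℝ) (x : ℝ) :
    movingAverage f x = ∫ u in (0 : ℝ)..1, f (x + u) := by
  simp [movingAverage, integral_comp_add_left]

theorem movingAverage_eq_sub (hf : ∀ a b, IntervalIntegrable f volume a b) (x : ℝ) :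
    movingAverage f x = (∫ t in (0 : ℝ)..x + 1, f t) - ∫ t in (0 : ℝ)..x, f t :=
  (integral_interval_sub_left (hf _ _) (hf _ _)).symm

theorem continuous_movingAverage (hf : ∀ a b, IntervalIntegrable f volume a b) :
    Continuous (movingAverage f) := by
  have hF := continuous_primitive hf 0
  rw [funext (movingAverage_eq_sub hf)]
  exact (hF.comp (continuous_add_const 1)).sub hF

theorem hasDerivAt_movingAverage (hf : Continuous f) (x : ℝ) :
    HasDerivAt (movingAverage f) (f (x + 1) - f x) x := by
  have hF : ∀ y, HasDerivAt (fun y => ∫ t in (0 : ℝ)..y, f t) (f y) y :=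
    fun y => (hf.integral_hasStrictDerivAt 0 y).hasDerivAt
  rw [funext (movingAverage_eq_sub fun a b => hf.intervalIntegrable a b)]
  exact ((hF (x + 1)).comp_add_const x 1).sub (hF x)

theorem tendsto_movingAverage_sub (hf : ∀ a b, IntervalIntegrable f volume a b)
    (hU : TendstoUniformlyOn (fun x u => f (x + u) - f x) 0 atTop (Icc 0 1)) :
    Tendsto (fun x => movingAverage f x - f x) atTop (𝓝 0) := by
  rw [tendstoUniformlyOn_add_sub_iff] at hU
  rw [Metric.tendsto_nhds]
  intro δ hδ
  filter_upwards [hU (δ / 2) (half_pos hδ)] with x hx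
  have hfx : IntervalIntegrable (fun u => f (x + u)) volume 0 1 := by
    simpa using (hf (x + 0) (x + 1)).comp_add_left x
  have : movingAverage f x - f x = ∫ u in (0 : ℝ)..1, (f (x + u) - f x) := by
    simp [movingAverage_eq_integral_comp_add, integral_sub hfx intervalIntegrable_const]
  rw [Real.dist_eq, sub_zero, this]
  exact (abs_integral_zero_one_le hx).trans_lt (half_lt_self hδ)

theorem tendstoUniformlyOn_movingAverage (hf : ∀ a b, IntervalIntegrable f volume a b)
    (hU : TendstoUniformlyOn (fun x u => f (x + u) - f x) 0 atTop (Icc 0 1)) :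
    TendstoUniformlyOn (fun x u => movingAverage f (x + u) - movingAverage f x) 0 atTop
      (Icc 0 1) := by
  rw [tendstoUniformlyOn_add_sub_iff] at hU ⊢
  intro δ hδ
  obtain ⟨X, hX⟩ := eventually_atTop.1 (hU δ hδ)
  filter_upwards [eventually_ge_atTop X] with x hx d hd
  have hfx : ∀ y, IntervalIntegrable (fun u => f (y + u)) volume 0 1 := fun y => by
    simpa using (hf (y + 0) (y + 1)).comp_add_left y
  rw [movingAverage_eq_integral_comp_add, movingAverage_eq_integral_comp_add,
    ← integral_sub (hfx _) (hfx _)]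
  refine abs_integral_zero_one_le fun u hu => ?_
  rw [show x + d + u = x + u + d by ring]
  exact hX (x + u) (by linarith [hu.1]) d hd

end MovingAverage

section AdditiveRepresentation

variable {h : ℝ → ℝ}

/-- Karamata's representation theorem in additive form. -/
theorem exists_tendsto_sub_integral (hm : Measurable h)
    (hp : ∀ u, Tendsto (fun x => h (x + u) - h x) atTop (𝓝 0)) :
    ∃ ε : ℝ → ℝ, Continuous ε ∧ Tendsto ε atTop (𝓝 0) ∧
      ∃ C, Tendsto (fun x => h x - ∫ t in (0 : ℝ)..x, ε t) atTop (𝓝 C) := by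
  have hU := tendstoUniformlyOn_add_sub hm hp
  obtain ⟨X, hX⟩ := eventually_atTop.1 (tendstoUniformlyOn_add_sub_iff.1 hU 1 one_pos)
  -- `h` need not be locally integrable; it is replaced by a function that agrees with it near `∞`.
  set g : ℝ → ℝ := fun x => h (max x X)
  have hgh : ∀ x ≥ X, g x = h x := fun x hx => by simp [g, max_eq_left hx]
  have hgi : ∀ a b, IntervalIntegrable g volume a b := intervalIntegrable_comp_max hm hX
  have hgU : TendstoUniformlyOn (fun x u => g (x + u) - g x) 0 atTop (Icc 0 1) := by
    refine hU.congr ?_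
    filter_upwards [eventually_ge_atTop X] with x hx u hu
    simp only [hgh x hx, hgh (x + u) (by linarith [hu.1])]
  -- Averaging twice makes the derivative `b (x + 1) - b x` continuous.
  set b := movingAverage g
  have hbc : Continuous b := continuous_movingAverage hgi
  have hbi : ∀ a a', IntervalIntegrable b volume a a' := hbc.intervalIntegrable
  have hbU := tendstoUniformlyOn_movingAverage hgi hgU
  have hεc : Continuous fun x => b (x + 1) - b x := by fun_prop
  refine ⟨fun x => b (x + 1) - b x, hεc, ?_, movingAverage b 0, ?_⟩
  · simpa using hbU.tendsto_at (right_mem_Icc.2 zero_le_one)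
  have hFTC : ∀ x, ∫ t in (0 : ℝ)..x, (b (t + 1) - b t) = movingAverage b x - movingAverage b 0 :=
    fun x => integral_eq_sub_of_hasDerivAt (fun t _ => hasDerivAt_movingAverage hbc t)
      (hεc.intervalIntegrable _ _)
  have hlim := ((tendsto_movingAverage_sub hgi hgU).add
    (tendsto_movingAverage_sub hbi hbU)).const_sub (movingAverage b 0)
  rw [add_zero, sub_zero] at hlim
  refine hlim.congr' ?_
  filter_upwards [eventually_ge_atTop X] with x hx
  rw [hFTC, ← hgh x hx]
  ring

theorem tendsto_integral_add_of_tendsto_zero {ε : ℝ → ℝ} (hε : Tendsto ε atTop (𝓝 0)) (u : ℝ) :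
    Tendsto (fun x => ∫ t in x..x + u, ε t) atTop (𝓝 0) := by
  rw [Metric.tendsto_nhds]
  intro δ hδ
  obtain ⟨X, hX⟩ := eventually_atTop.1 ((Metric.tendsto_nhds.1 hε) (δ / (|u| + 1)) (by positivity))
  filter_upwards [eventually_ge_atTop (X + |u|)] with x hx
  have hbound : ∀ t ∈ uIoc x (x + u), ‖ε t‖ ≤ δ / (|u| + 1) := fun t ht => by
    have hXx : X ≤ min x (x + u) := le_min (by linarith [abs_nonneg u]) (by linarith [neg_abs_le u])
    have : X ≤ t := hXx.trans ht.1.le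
    simpa [Real.dist_eq] using (hX t this).le
  rw [Real.dist_eq, sub_zero]
  calc |∫ t in x..x + u, ε t| ≤ δ / (|u| + 1) * |x + u - x| :=
        norm_integral_le_of_norm_le_const hbound
    _ < δ := by
      rw [add_sub_cancel_left, div_mul_eq_mul_div, div_lt_iff₀ (by positivity)]
      nlinarith [abs_nonneg u]

theorem tendsto_add_sub_of_eq_add_integral {ρ ε : ℝ → ℝ} {C : ℝ}
    (hρ : Tendsto ρ atTop (𝓝 C)) (hεc : ContinuousOn ε (Ici 0)) (hε : Tendsto ε atTop (𝓝 0))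
    (hh : ∀ x ≥ 0, h x = ρ x + ∫ t in (0 : ℝ)..x, ε t) (u : ℝ) :
    Tendsto (fun x => h (x + u) - h x) atTop (𝓝 0) := by
  have hρu : Tendsto (fun x => ρ (x + u) - ρ x) atTop (𝓝 0) := by
    simpa using (hρ.comp (tendsto_atTop_add_const_right _ u tendsto_id)).sub hρ
  have hεi : ∀ a b, 0 ≤ a → 0 ≤ b → IntervalIntegrable ε volume a b := fun a b ha hb =>
    (hεc.mono (ordConnected_Ici.uIcc_subset ha hb)).intervalIntegrable
  simpa using (hρu.add (tendsto_integral_add_of_tendsto_zero hε u)).congr' (by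
    filter_upwards [eventually_ge_atTop 0, eventually_ge_atTop (-u)] with x hx hxu
    rw [hh x hx, hh (x + u) (by linarith),
      ← integral_interval_sub_left (hεi _ _ le_rfl (by linarith)) (hεi _ _ le_rfl hx)]
    ring)

end AdditiveRepresentation

section Multiplicative

theorem tendsto_exp_comp_nhds_one_iff {α : Type*} {l : Filter α} {F : α → ℝ} :
    Tendsto (fun x => Real.exp (F x)) l (𝓝 1) ↔ Tendsto F l (𝓝 0) := by
  refine ⟨fun hF => ?_, fun hF => by
    simpa [Function.comp_def] using (Real.continuous_exp.tendsto 0).comp hF⟩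
  simpa [Function.comp_def] using (Real.continuousAt_log one_ne_zero).tendsto.comp hF

variable {c : ℝ}

theorem map_const_mul_exp_neg_atTop (hc : 0 < c) :
    map (fun x => c * Real.exp (-x)) atTop = 𝓝[>] 0 := by
  have hφ : (fun x => c * Real.exp (-x)) = (c * ·) ∘ Real.exp ∘ Neg.neg := rfl
  rw [hφ, ← map_map, ← map_map, map_neg_atTop, Real.map_exp_atBot,
    map_eq_comap_of_inverse (n := (c⁻¹ * ·)) (funext fun y => by simp [hc.ne'])
      (funext fun y => by simp [hc.ne']), comap_mulLeft_nhdsGT_zero (inv_pos.2 hc)]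

theorem const_mul_exp_neg_mem_Ioc (hc : 0 < c) {x : ℝ} (hx : 0 ≤ x) :
    c * Real.exp (-x) ∈ Ioc 0 c :=
  ⟨by positivity, mul_le_of_le_one_right hc.le (Real.exp_le_one_iff.2 (by linarith))⟩

theorem log_div_const_mul_exp_neg (hc : c ≠ 0) (x : ℝ) :
    Real.log (c / (c * Real.exp (-x))) = x := by
  rw [div_mul_cancel_left₀ hc, Real.exp_neg, inv_inv, Real.log_exp]

theorem const_mul_exp_neg_log_div (hc : 0 < c) {t : ℝ} (ht : 0 < t) :
    c * Real.exp (-Real.log (c / t)) = t := by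
  rw [Real.exp_neg, Real.exp_log (div_pos hc ht)]
  field_simp

theorem tendsto_div_iff_tendsto_log_sub (hc : 0 < c) {L : ℝ → ℝ}
    (hL : ∀ t ∈ Ioc 0 c, 0 < L t) (u : ℝ) :
    Tendsto (fun t => L (Real.exp (-u) * t) / L t) (𝓝[>] 0) (𝓝 1) ↔
      Tendsto (fun x => Real.log (L (c * Real.exp (-(x + u)))) -
        Real.log (L (c * Real.exp (-x)))) atTop (𝓝 0) := by
  rw [← map_const_mul_exp_neg_atTop hc, tendsto_map'_iff, ← tendsto_exp_comp_nhds_one_iff]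
  refine tendsto_congr' ?_
  filter_upwards [eventually_ge_atTop 0, eventually_ge_atTop (-u)] with x hx hxu
  rw [Function.comp_apply, Real.exp_sub,
    Real.exp_log (hL _ (const_mul_exp_neg_mem_Ioc hc (by linarith))),
    Real.exp_log (hL _ (const_mul_exp_neg_mem_Ioc hc hx)), neg_add, Real.exp_add]
  ring_nf

theorem slowlyVarying_iff_tendsto_log_sub (hc : 0 < c) {L : ℝ → ℝ}
    (hL : ∀ t ∈ Ioc 0 c, 0 < L t) :
    (∀ ξ : ℝ, 0 < ξ → Tendsto (fun t => L (ξ * t) / L t) (𝓝[>] 0) (𝓝 1)) ↔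
      ∀ u, Tendsto (fun x => Real.log (L (c * Real.exp (-(x + u)))) -
        Real.log (L (c * Real.exp (-x)))) atTop (𝓝 0) := by
  refine ⟨fun H u => (tendsto_div_iff_tendsto_log_sub hc hL u).1 (H _ (Real.exp_pos _)),
    fun H ξ hξ => ?_⟩
  simpa [Real.exp_log hξ] using (tendsto_div_iff_tendsto_log_sub hc hL (-Real.log ξ)).2 (H _)

theorem integral_div_eq_integral_comp_const_mul_exp_neg (hc : 0 < c) {ε : ℝ → ℝ}
    (hε : ContinuousOn ε (Ioc 0 c)) {x : ℝ} (hx : 0 ≤ x) :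
    ∫ r in c * Real.exp (-x)..c, ε r / r = ∫ s in (0 : ℝ)..x, ε (c * Real.exp (-s)) := by
  have hφ : ∀ s ∈ uIcc 0 x,
      HasDerivAt (fun s => c * Real.exp (-s)) (-(c * Real.exp (-s))) s := fun s _ => by
    simpa using ((Real.hasDerivAt_exp (-s)).comp s (hasDerivAt_neg s)).const_mul c
  have hmaps : (fun s => c * Real.exp (-s)) '' uIcc 0 x ⊆ Ioc 0 c := by
    rintro _ ⟨s, hs, rfl⟩
    exact const_mul_exp_neg_mem_Ioc hc (by rw [uIcc_of_le hx] at hs; exact hs.1)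
  have := integral_comp_mul_deriv' (g := fun r => ε r / r) hφ (by fun_prop)
    ((hε.mono hmaps).div continuousOn_id fun r hr => (hmaps hr).1.ne')
  simp only [neg_zero, Real.exp_zero, mul_one] at this
  rw [integral_symm, ← this, ← intervalIntegral.integral_neg]
  refine integral_congr fun s _ => ?_
  simp only [Function.comp_apply]
  field_simp

theorem exists_representation_of_tendsto_sub_integral (hc : 0 < c) {L : ℝ → ℝ}
    (hLmeas : Measurable L) (hLpos : ∀ t ∈ Ioc 0 c, 0 < L t) {e : ℝ → ℝ} (hec : Continuous e)
    (he : Tendsto e atTop (𝓝 0)) {C : ℝ}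
    (hC : Tendsto (fun x => Real.log (L (c * Real.exp (-x))) - ∫ t in (0 : ℝ)..x, e t) atTop
      (𝓝 C)) :
    ∃ (η : ℝ → ℝ) (ε : ℝ → ℝ) (η₀ : ℝ),
      Measurable η ∧ 0 < η₀ ∧ Tendsto η (𝓝[>] 0) (𝓝 η₀) ∧ ContinuousOn ε (Ioc 0 c) ∧
      Tendsto ε (𝓝[>] 0) (𝓝 0) ∧
      ∀ t ∈ Ioc 0 c, L t = η t * Real.exp (∫ r in t..c, ε r / r) := by
  have hE : Continuous fun y => ∫ s in (0 : ℝ)..y, e s :=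
    continuous_primitive hec.intervalIntegrable 0
  have hεc : ContinuousOn (fun r => e (Real.log (c / r))) (Ioc 0 c) :=
    hec.comp_continuousOn ((continuousOn_const.div continuousOn_id
      fun r hr => hr.1.ne').log fun r hr => (div_pos hc hr.1).ne')
  refine ⟨fun t => L t * Real.exp (-∫ s in (0 : ℝ)..Real.log (c / t), e s),
    fun r => e (Real.log (c / r)), Real.exp C, by fun_prop, Real.exp_pos C, ?_, hεc, ?_, ?_⟩
  · rw [← map_const_mul_exp_neg_atTop hc, tendsto_map'_iff]
    refine ((Real.continuous_exp.tendsto C).comp hC).congr' ?_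
    filter_upwards [eventually_ge_atTop 0] with x hx
    dsimp only [Function.comp_apply]
    rw [log_div_const_mul_exp_neg hc.ne', Real.exp_sub,
      Real.exp_log (hLpos _ (const_mul_exp_neg_mem_Ioc hc hx)), div_eq_mul_inv, ← Real.exp_neg]
  · rw [← map_const_mul_exp_neg_atTop hc, tendsto_map'_iff]
    exact he.congr fun x => by rw [Function.comp_apply, log_div_const_mul_exp_neg hc.ne']
  · rintro t ⟨ht, htc⟩
    have hx : 0 ≤ Real.log (c / t) := Real.log_nonneg ((one_le_div ht).2 htc)
    have key := integral_div_eq_integral_comp_const_mul_exp_neg hc hεc hx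
    simp only [log_div_const_mul_exp_neg hc.ne', const_mul_exp_neg_log_div hc ht] at key
    rw [key, mul_assoc, ← Real.exp_add, neg_add_cancel, Real.exp_zero, mul_one]

theorem tendsto_log_sub_of_eq_mul_exp_integral (hc : 0 < c) {L η ε : ℝ → ℝ} {η₀ : ℝ}
    (hLpos : ∀ t ∈ Ioc 0 c, 0 < L t) (hη₀ : 0 < η₀) (hη : Tendsto η (𝓝[>] 0) (𝓝 η₀))
    (hεc : ContinuousOn ε (Ioc 0 c)) (hε : Tendsto ε (𝓝[>] 0) (𝓝 0))
    (hrep : ∀ t ∈ Ioc 0 c, L t = η t * Real.exp (∫ r in t..c, ε r / r)) (u : ℝ) :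
    Tendsto (fun x => Real.log (L (c * Real.exp (-(x + u)))) -
      Real.log (L (c * Real.exp (-x)))) atTop (𝓝 0) := by
  have hφ : Tendsto (fun x => c * Real.exp (-x)) atTop (𝓝[>] 0) :=
    (map_const_mul_exp_neg_atTop hc).le
  refine tendsto_add_sub_of_eq_add_integral (h := fun x => Real.log (L (c * Real.exp (-x))))
    ((Real.continuousAt_log hη₀.ne').tendsto.comp (hη.comp hφ))
    (hεc.comp (by fun_prop) fun s hs => const_mul_exp_neg_mem_Ioc hc hs) (hε.comp hφ)
    (fun x hx => ?_) u
  have hmem := const_mul_exp_neg_mem_Ioc hc hx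
  have hLx := hrep _ hmem
  have hηpos : 0 < η (c * Real.exp (-x)) :=
    pos_of_mul_pos_left (hLx ▸ hLpos _ hmem) (Real.exp_pos _).le
  rw [hLx, Real.log_mul hηpos.ne' (Real.exp_pos _).ne', Real.log_exp,
    integral_div_eq_integral_comp_const_mul_exp_neg hc hεc hx]
  rfl

end Multiplicative

/-- Representation theorem for slowly varying functions at `0`. -/
theorem slowly_varying_iff_representation
    (c : ℝ) (hc : 0 < c) (L : ℝ → ℝ) (hLmeas : Measurable L)
    (hLpos : ∀ t ∈ Set.Ioc 0 c, 0 < L t) :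
    (∀ ξ : ℝ, 0 < ξ →
        Tendsto (fun t => L (ξ * t) / L t) (nhdsWithin 0 (Set.Ioi 0)) (nhds 1)) ↔
    ∃ (η : ℝ → ℝ) (ε : ℝ → ℝ) (η₀ : ℝ),
      Measurable η ∧ 0 < η₀ ∧
      Tendsto η (nhdsWithin 0 (Set.Ioi 0)) (nhds η₀) ∧
      ContinuousOn ε (Set.Ioc 0 c) ∧
      Tendsto ε (nhdsWithin 0 (Set.Ioi 0)) (nhds 0) ∧
      ∀ t ∈ Set.Ioc 0 c, L t = η t * Real.exp (∫ r in t..c, ε r / r) := by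
  rw [slowlyVarying_iff_tendsto_log_sub hc hLpos]
  constructor
  · intro hp
    obtain ⟨e, hec, he, C, hC⟩ :=
      exists_tendsto_sub_integral (h := fun x => Real.log (L (c * Real.exp (-x)))) (by fun_prop) hp
    exact exists_representation_of_tendsto_sub_integral hc hLmeas hLpos hec he hC
  · rintro ⟨η, ε, η₀, -, hη₀, hη, hεc, hε, hrep⟩
    exact tendsto_log_sub_of_eq_mul_exp_integral hc hLpos hη₀ hη hεc hε hrep
end

section
/- (Karamata's Theorem at 0, direct part) Let f be regularly varying at 0 with index ρ and locally bounded on (0,c]. If j > -(ρ+1), then lim_{t→0⁺} t^{j+1} f(t) / ∫₀^t r^j f(r) dr = j + ρ + 1; in particular the integral ∫₀^t r^j f(r) dr is finite for small t > 0. -/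
/-!
Write `f t = t ^ ρ * ℓ t`. Then `h x = log ℓ (e⁻ˣ)` satisfies `h (x + u) - h x → 0`, and the
uniform convergence theorem (Egorov's theorem plus a measure count) upgrades this to
`|h (x + u) - h x| ≤ ε (u + 1)` for large `x`, i.e. to Potter's bound
`f (s t) ≤ e^ε s ^ (ρ - ε) f t` for small `t` and `s ≤ 1`. The substitution `r = s t` turns
`t ^ (j + 1) f t / ∫₀ᵗ r ^ j f r dr` into the reciprocal of `∫₀¹ s ^ j f (s t) / f t ds`, which
tends to `∫₀¹ s ^ (j + ρ) ds = 1 / (j + ρ + 1)` by dominated convergence: Potter's bound with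
`ε < j + ρ + 1` gives the integrable dominant `e^ε s ^ (j + ρ - ε)`.
-/

open Filter Set MeasureTheory Real Topology

lemma exists_mem_Icc_notMem_and_sub_notMem {t₁ t₂ : Set ℝ}
    (h₁ : volume t₁ ≤ ENNReal.ofReal (1 / 4)) (h₂ : volume t₂ ≤ ENNReal.ofReal (1 / 4)) (u : ℝ) :
    ∃ v ∈ Icc (1 : ℝ) 2, v ∉ t₁ ∧ v - u ∉ t₂ := by
  by_contra! hcover
  have hsub : Icc (1 : ℝ) 2 ⊆ t₁ ∪ (fun v => v + -u) ⁻¹' t₂ := fun v hv => by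
    by_cases hv₁ : v ∈ t₁
    · exact Or.inl hv₁
    · exact Or.inr (by simpa [← sub_eq_add_neg] using hcover v hv hv₁)
  have : ENNReal.ofReal 1 ≤ ENNReal.ofReal (1 / 2) :=
    calc ENNReal.ofReal 1 = volume (Icc (1 : ℝ) 2) := by rw [Real.volume_Icc]; norm_num
      _ ≤ volume t₁ + volume t₂ := by
        rw [← measure_preimage_add_right volume (-u) t₂]
        exact (measure_mono hsub).trans (measure_union_le _ _)
      _ ≤ ENNReal.ofReal (1 / 4) + ENNReal.ofReal (1 / 4) := add_le_add h₁ h₂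
      _ = ENNReal.ofReal (1 / 2) := by rw [← ENNReal.ofReal_add] <;> norm_num
  rw [ENNReal.ofReal_le_ofReal_iff (by norm_num)] at this
  norm_num at this

section UniformConvergence

variable {h : ℝ → ℝ}

lemma Measurable.exists_volume_le_eventually_abs_add_sub_lt (hmeas : Measurable h)
    (hlim : ∀ u, 0 ≤ u → Tendsto (fun x => h (x + u) - h x) atTop (𝓝 0))
    {x : ℕ → ℝ} (hx : Tendsto x atTop atTop) {δ : ℝ} (hδ : 0 < δ) :
    ∃ t : Set ℝ, volume t ≤ ENNReal.ofReal (1 / 4) ∧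
      ∀ᶠ n in atTop, ∀ v ∈ Icc 0 2 \ t, |h (x n + v) - h (x n)| < δ := by
  obtain ⟨t, -, -, ht, hunif⟩ := tendstoUniformlyOn_of_ae_tendsto (μ := volume)
    (f := fun n v => h (x n + v) - h (x n)) (g := fun _ => 0)
    (fun n => ((hmeas.comp (measurable_const_add _)).sub_const _).stronglyMeasurable)
    stronglyMeasurable_const measurableSet_Icc (by simp)
    (ae_of_all _ fun v hv => (hlim v hv.1).comp hx) (by norm_num : (0 : ℝ) < 1 / 4)
  refine ⟨t, ht, (Metric.tendstoUniformlyOn_iff.mp hunif δ hδ).mono fun n hn v hv => ?_⟩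
  simpa [Real.dist_eq, abs_sub_comm] using hn v hv

/-- The uniform convergence theorem. Along a sequence of counterexamples `(x n, u n)`, Egorov's
theorem for `x n` and for `x n + u n` leaves a common good point `v`, and comparing both ends with
`h (x n + v)` makes `h (x n + u n) - h (x n)` small. -/
theorem Measurable.exists_forall_ge_abs_add_sub_le (hmeas : Measurable h)
    (hlim : ∀ u, 0 ≤ u → Tendsto (fun x => h (x + u) - h x) atTop (𝓝 0))
    {ε : ℝ} (hε : 0 < ε) :
    ∃ X, ∀ x ≥ X, ∀ u ∈ Icc (0 : ℝ) 1, |h (x + u) - h x| ≤ ε := by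
  by_contra! hbad
  choose x hx u hu hgt using fun n : ℕ => hbad n
  have hxtop : Tendsto x atTop atTop := tendsto_atTop_mono hx tendsto_natCast_atTop_atTop
  have hxutop : Tendsto (fun n => x n + u n) atTop atTop :=
    tendsto_atTop_add_right_of_le _ 0 hxtop fun n => (hu n).1
  obtain ⟨t₁, ht₁, hsmall₁⟩ := hmeas.exists_volume_le_eventually_abs_add_sub_lt hlim hxtop
    (half_pos hε)
  obtain ⟨t₂, ht₂, hsmall₂⟩ := hmeas.exists_volume_le_eventually_abs_add_sub_lt hlim hxutop
    (half_pos hε)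
  obtain ⟨n, hn₁, hn₂⟩ := (hsmall₁.and hsmall₂).exists
  obtain ⟨v, hv, hv₁, hv₂⟩ := exists_mem_Icc_notMem_and_sub_notMem ht₁ ht₂ (u n)
  have e₁ := hn₁ v ⟨⟨by linarith [hv.1], hv.2⟩, hv₁⟩
  have e₂ := hn₂ (v - u n) ⟨⟨by linarith [hv.1, (hu n).2], by linarith [hv.2, (hu n).1]⟩, hv₂⟩
  rw [add_add_sub_cancel] at e₂
  have htri := abs_sub_le (h (x n + u n)) (h (x n + v)) (h (x n))
  rw [abs_sub_comm (h (x n + u n)) (h (x n + v))] at htri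
  linarith [hgt n]

theorem Measurable.exists_forall_ge_abs_add_sub_le_mul (hmeas : Measurable h)
    (hlim : ∀ u, 0 ≤ u → Tendsto (fun x => h (x + u) - h x) atTop (𝓝 0))
    {ε : ℝ} (hε : 0 < ε) :
    ∃ X, ∀ x ≥ X, ∀ u, 0 ≤ u → |h (x + u) - h x| ≤ ε * (u + 1) := by
  obtain ⟨X, hX⟩ := hmeas.exists_forall_ge_abs_add_sub_le hlim hε
  have hstep : ∀ n : ℕ, ∀ x ≥ X, ∀ u ∈ Icc (0 : ℝ) 1, |h (x + n + u) - h x| ≤ ε * (n + 1) := by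
    intro n
    induction n with
    | zero => simpa using hX
    | succ n ih =>
      intro x hx u hu
      have h₁ := ih (x + 1) (by linarith) u hu
      have h₂ := hX x hx 1 ⟨zero_le_one, le_rfl⟩
      have htri := abs_sub_le (h (x + 1 + n + u)) (h (x + 1)) (h x)
      push_cast
      rw [show x + (n + 1) = x + 1 + n by ring]
      linarith
  refine ⟨X, fun x hx u hu => ?_⟩
  have hfloor := hstep ⌊u⌋₊ x hx (u - ⌊u⌋₊) ⟨by linarith [Nat.floor_le hu],
    by linarith [Nat.lt_floor_add_one u]⟩
  rw [add_add_sub_cancel] at hfloor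
  exact hfloor.trans (by gcongr; exact Nat.floor_le hu)

end UniformConvergence

/-- `log ℓ (e⁻ˣ)` for the slowly varying part `ℓ t = f t * t ^ (-ρ)` of `f`. -/
noncomputable def logSlowPart (f : ℝ → ℝ) (ρ x : ℝ) : ℝ := log (f (exp (-x))) + ρ * x

lemma logSlowPart_neg_log (f : ℝ → ℝ) (ρ : ℝ) {t : ℝ} (ht : 0 < t) :
    logSlowPart f ρ (-log t) = log (f t) - ρ * log t := by
  simp [logSlowPart, exp_log ht, sub_eq_add_neg]

section RegularVariation

variable {c ρ : ℝ} {f : ℝ → ℝ}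

lemma Measurable.logSlowPart (hfmeas : Measurable f) : Measurable (logSlowPart f ρ) :=
  (measurable_log.comp (hfmeas.comp (measurable_exp.comp measurable_neg))).add
    (measurable_const.mul measurable_id)

lemma tendsto_logSlowPart_add_sub (hc : 0 < c) (hfpos : ∀ t ∈ Ioc 0 c, 0 < f t)
    (hRV : ∀ ξ : ℝ, 0 < ξ → Tendsto (fun t => f (ξ * t) / f t) (𝓝[>] 0) (𝓝 (ξ ^ ρ))) (u : ℝ) :
    Tendsto (fun x => logSlowPart f ρ (x + u) - logSlowPart f ρ x) atTop (𝓝 0) := by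
  have hexp : Tendsto (fun x : ℝ => exp (-x)) atTop (𝓝[>] 0) :=
    tendsto_nhdsWithin_of_tendsto_nhds_of_eventually_within _ tendsto_exp_neg_atTop_nhds_zero
      (Eventually.of_forall fun x => exp_pos _)
  have hratio := ((continuousAt_log (rpow_pos_of_pos (exp_pos (-u)) ρ).ne').tendsto.comp
    ((hRV _ (exp_pos (-u))).comp hexp)).add_const (ρ * u)
  rw [log_rpow (exp_pos _), log_exp, mul_neg, neg_add_cancel] at hratio
  refine hratio.congr' ?_
  filter_upwards [eventually_ge_atTop (-log c), eventually_ge_atTop (-log c - u)] with x hx hxu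
  have hmem : ∀ y ≥ -log c, exp (-y) ∈ Ioc 0 c := fun y hy =>
    ⟨exp_pos _, (exp_le_exp.mpr (by linarith)).trans_eq (exp_log hc)⟩
  have hprod : exp (-u) * exp (-x) = exp (-(x + u)) := by rw [← exp_add]; ring_nf
  simp only [Function.comp_apply, logSlowPart, hprod]
  rw [log_div (hfpos _ (hmem _ (by linarith))).ne' (hfpos _ (hmem _ hx)).ne']
  ring

theorem exists_potter_bound (hc : 0 < c) (hfmeas : Measurable f)
    (hfpos : ∀ t ∈ Ioc 0 c, 0 < f t)
    (hRV : ∀ ξ : ℝ, 0 < ξ → Tendsto (fun t => f (ξ * t) / f t) (𝓝[>] 0) (𝓝 (ξ ^ ρ)))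
    {ε : ℝ} (hε : 0 < ε) :
    ∃ T ∈ Ioo 0 c, ∀ t ∈ Ioc 0 T, ∀ s ∈ Ioc 0 1, f (s * t) ≤ exp ε * s ^ (ρ - ε) * f t := by
  obtain ⟨X, hX⟩ := hfmeas.logSlowPart.exists_forall_ge_abs_add_sub_le_mul
    (fun u _ => tendsto_logSlowPart_add_sub hc hfpos hRV u) hε
  refine ⟨min (c / 2) (exp (-X)), ⟨lt_min (half_pos hc) (exp_pos _),
    (min_le_left _ _).trans_lt (half_lt_self hc)⟩, fun t ht s hs => ?_⟩
  have hT : min (c / 2) (exp (-X)) ≤ c := (min_le_left _ _).trans (half_le_self hc.le)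
  have ht0 := ht.1
  have hs0 := hs.1
  have hst : s * t ∈ Ioc 0 c :=
    ⟨mul_pos hs0 ht0, (mul_le_of_le_one_left ht0.le hs.2).trans (ht.2.trans hT)⟩
  have hxX : -log t ≥ X := by
    have := log_le_log ht0 (ht.2.trans (min_le_right _ _))
    rw [log_exp] at this
    linarith
  have hsum : -log t + -log s = -log (s * t) := by rw [log_mul hs0.ne' ht0.ne']; ring
  have hbound :=
    (abs_le.mp (hX (-log t) hxX (-log s) (neg_nonneg.mpr (log_nonpos hs0.le hs.2)))).2
  rw [hsum, logSlowPart_neg_log f ρ hst.1, logSlowPart_neg_log f ρ ht0,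
    log_mul hs0.ne' ht0.ne'] at hbound
  have hft := hfpos t ⟨ht0, ht.2.trans hT⟩
  rw [← log_le_log_iff (hfpos _ hst) (by positivity), log_mul (by positivity) hft.ne',
    log_mul (exp_pos _).ne' (rpow_pos_of_pos hs0 _).ne', log_exp, log_rpow hs0]
  linarith

end RegularVariation

lemma setIntegral_Ioc_zero_rpow_mul_eq (f : ℝ → ℝ) (j : ℝ) {t : ℝ} (ht : 0 < t) :
    ∫ r in Ioc 0 t, r ^ j * f r = t ^ (j + 1) * ∫ s in Ioc 0 1, s ^ j * f (s * t) := by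
  have hsubst := intervalIntegral.integral_comp_mul_left (a := 0) (b := 1)
    (fun r => r ^ j * f r) ht.ne'
  rw [mul_zero, mul_one, smul_eq_mul, intervalIntegral.integral_of_le zero_le_one,
    intervalIntegral.integral_of_le ht.le] at hsubst
  have hscale : ∫ s in Ioc (0 : ℝ) 1, (t * s) ^ j * f (t * s) =
      t ^ j * ∫ s in Ioc (0 : ℝ) 1, s ^ j * f (s * t) := by
    rw [← integral_const_mul]
    refine setIntegral_congr_fun measurableSet_Ioc fun s hs => ?_
    rw [mul_rpow ht.le hs.1.le, mul_comm s t]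
    ring
  rw [rpow_add_one ht.ne', mul_comm (t ^ j) t, mul_assoc, ← hscale, hsubst,
    mul_inv_cancel_left₀ ht.ne']

lemma integrableOn_Icc_rpow_mul_of_abs_le {f : ℝ → ℝ} {a b M : ℝ} (j : ℝ) (ha : 0 < a)
    (hfmeas : Measurable f) (hf : ∀ r ∈ Icc a b, |f r| ≤ M) :
    IntegrableOn (fun r => r ^ j * f r) (Icc a b) :=
  (Measure.integrableOn_of_bounded (M := M) (by simp) hfmeas.aestronglyMeasurable
    ((ae_restrict_iff' measurableSet_Icc).mpr (ae_of_all _ hf))).continuousOn_mul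
    (fun r hr => (continuousAt_rpow_const r j (Or.inl (ha.trans_le hr.1).ne')).continuousWithinAt)
    isCompact_Icc

section Potter

variable {f : ℝ → ℝ} {j ρ ε T : ℝ}

lemma rpow_mul_le_of_potter (hpotter : ∀ t ∈ Ioc 0 T, ∀ s ∈ Ioc 0 1,
      f (s * t) ≤ exp ε * s ^ (ρ - ε) * f t)
    {t s : ℝ} (ht : t ∈ Ioc 0 T) (hs : s ∈ Ioc 0 1) :
    s ^ j * f (s * t) ≤ exp ε * f t * s ^ (j + (ρ - ε)) := by
  calc s ^ j * f (s * t) ≤ s ^ j * (exp ε * s ^ (ρ - ε) * f t) :=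
        mul_le_mul_of_nonneg_left (hpotter t ht s hs) (rpow_nonneg hs.1.le j)
    _ = exp ε * f t * s ^ (j + (ρ - ε)) := by rw [rpow_add hs.1]; ring

lemma integrableOn_Ioc_zero_rpow_mul_of_potter (hfmeas : Measurable f) (hT : 0 < T)
    (hfpos : ∀ t ∈ Ioc 0 T, 0 < f t)
    (hpotter : ∀ t ∈ Ioc 0 T, ∀ s ∈ Ioc 0 1, f (s * t) ≤ exp ε * s ^ (ρ - ε) * f t)
    (hε : ε < j + ρ + 1) :
    IntegrableOn (fun r => r ^ j * f r) (Ioc 0 T) := by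
  set q := j + (ρ - ε)
  have hdom : IntegrableOn (fun r : ℝ => T ^ j * (exp ε * f T) / T ^ q * r ^ q) (Ioc 0 T) := by
    have := intervalIntegral.intervalIntegrable_rpow' (a := 0) (b := T) (by linarith : -1 < q)
    exact ((intervalIntegrable_iff_integrableOn_Ioc_of_le hT.le).mp this).const_mul _
  refine hdom.mono' ((measurable_id.pow_const j).mul hfmeas).aestronglyMeasurable
    ((ae_restrict_iff' measurableSet_Ioc).mpr (ae_of_all _ fun r hr => ?_))
  have hs : r / T ∈ Ioc 0 1 := ⟨div_pos hr.1 hT, div_le_one_of_le₀ hr.2 hT.le⟩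
  have hrT : r / T * T = r := div_mul_cancel₀ r hT.ne'
  rw [norm_of_nonneg (mul_nonneg (rpow_nonneg hr.1.le j) (hfpos r hr).le)]
  calc r ^ j * f r = T ^ j * ((r / T) ^ j * f (r / T * T)) := by
        rw [hrT, div_rpow hr.1.le hT.le]; field_simp
    _ ≤ T ^ j * (exp ε * f T * (r / T) ^ q) :=
        mul_le_mul_of_nonneg_left (rpow_mul_le_of_potter hpotter ⟨hT, le_rfl⟩ hs)
          (rpow_nonneg hT.le j)
    _ = T ^ j * (exp ε * f T) / T ^ q * r ^ q := by rw [div_rpow hr.1.le hT.le]; ring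

lemma tendsto_setIntegral_rpow_mul_div (hfmeas : Measurable f) (hT : 0 < T)
    (hfpos : ∀ t ∈ Ioc 0 T, 0 < f t)
    (hRV : ∀ ξ : ℝ, 0 < ξ → Tendsto (fun t => f (ξ * t) / f t) (𝓝[>] 0) (𝓝 (ξ ^ ρ)))
    (hpotter : ∀ t ∈ Ioc 0 T, ∀ s ∈ Ioc 0 1, f (s * t) ≤ exp ε * s ^ (ρ - ε) * f t)
    (hε₀ : 0 ≤ ε) (hε : ε < j + ρ + 1) :
    Tendsto (fun t => (∫ s in Ioc 0 1, s ^ j * f (s * t)) / f t) (𝓝[>] 0)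
      (𝓝 (j + ρ + 1)⁻¹) := by
  have hintegral : ∫ s in Ioc (0 : ℝ) 1, s ^ (j + ρ) = (j + ρ + 1)⁻¹ := by
    rw [← intervalIntegral.integral_of_le zero_le_one, integral_rpow (Or.inl (by linarith)),
      one_rpow, zero_rpow (by linarith)]
    ring
  have hdom : IntegrableOn (fun s : ℝ => exp ε * s ^ (j + (ρ - ε))) (Ioc 0 1) := by
    have := intervalIntegral.intervalIntegrable_rpow' (a := 0) (b := 1)
      (by linarith : -1 < j + (ρ - ε))
    exact ((intervalIntegrable_iff_integrableOn_Ioc_of_le zero_le_one).mp this).const_mul _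
  simp_rw [← integral_div, mul_div_assoc]
  rw [← hintegral]
  refine tendsto_integral_filter_of_dominated_convergence _
    (Eventually.of_forall fun t => ((measurable_id.pow_const j).mul
      ((hfmeas.comp (measurable_mul_const t)).div_const _)).aestronglyMeasurable) ?_ hdom
    ((ae_restrict_iff' measurableSet_Ioc).mpr (ae_of_all _ fun s hs => ?_))
  · filter_upwards [Ioc_mem_nhdsGT hT] with t ht
    refine (ae_restrict_iff' measurableSet_Ioc).mpr (ae_of_all _ fun s hs => ?_)
    have hft := hfpos t ht
    have hst : s * t ∈ Ioc 0 T :=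
      ⟨mul_pos hs.1 ht.1, (mul_le_of_le_one_left ht.1.le hs.2).trans ht.2⟩
    rw [norm_of_nonneg (mul_nonneg (rpow_nonneg hs.1.le j) (div_pos (hfpos _ hst) hft).le),
      ← mul_div_assoc, div_le_iff₀ hft]
    linarith [rpow_mul_le_of_potter (j := j) hpotter ht hs]
  · rw [rpow_add hs.1]
    exact (hRV s hs.1).const_mul _

end Potter

/-- Karamata's theorem at `0`, direct part, for `j > -(ρ+1)`. -/
theorem karamata_at_zero
    (c ρ j : ℝ) (hc : 0 < c) (f : ℝ → ℝ) (hfmeas : Measurable f)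
    (hfpos : ∀ t ∈ Set.Ioc 0 c, 0 < f t)
    (hRV : ∀ ξ : ℝ, 0 < ξ →
        Tendsto (fun t => f (ξ * t) / f t) (nhdsWithin 0 (Set.Ioi 0)) (nhds (ξ ^ ρ)))
    (hlocbdd : ∀ a ∈ Set.Ioo 0 c, ∃ M : ℝ, ∀ t ∈ Set.Icc a c, f t ≤ M)
    (hj : j > -(ρ + 1)) :
    (∀ t ∈ Set.Ioc 0 c, IntegrableOn (fun r => r ^ j * f r) (Set.Ioc 0 t)) ∧
    Tendsto (fun t => t ^ (j + 1) * f t / ∫ r in Set.Ioc 0 t, r ^ j * f r)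
      (nhdsWithin 0 (Set.Ioi 0)) (nhds (j + ρ + 1)) := by
  have hε₀ : 0 < (j + ρ + 1) / 2 := by linarith
  have hε : (j + ρ + 1) / 2 < j + ρ + 1 := by linarith
  obtain ⟨T, ⟨hT, hTc⟩, hpotter⟩ := exists_potter_bound hc hfmeas hfpos hRV hε₀
  have hfposT : ∀ t ∈ Ioc 0 T, 0 < f t := fun t ht => hfpos t ⟨ht.1, ht.2.trans hTc.le⟩
  obtain ⟨M, hM⟩ := hlocbdd T ⟨hT, hTc⟩
  have htail : IntegrableOn (fun r => r ^ j * f r) (Icc T c) :=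
    integrableOn_Icc_rpow_mul_of_abs_le j hT hfmeas fun r hr =>
      abs_le.mpr ⟨by linarith [hfpos r ⟨hT.trans_le hr.1, hr.2⟩, hM r hr], hM r hr⟩
  refine ⟨fun t ht => ?_, ?_⟩
  · refine ((integrableOn_Ioc_zero_rpow_mul_of_potter hfmeas hT hfposT hpotter hε).union
      htail).mono_set fun r hr => ?_
    exact (le_or_gt r T).imp (fun h => ⟨hr.1, h⟩) fun h => ⟨h.le, hr.2.trans ht.2⟩
  have hlim := (tendsto_setIntegral_rpow_mul_div hfmeas hT hfposT hRV hpotter hε₀.le hε).inv₀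
    (inv_ne_zero (by linarith))
  rw [inv_inv] at hlim
  refine hlim.congr' ?_
  filter_upwards [Ioc_mem_nhdsGT hT] with t ht
  rw [setIntegral_Ioc_zero_rpow_mul_eq f j ht.1,
    mul_div_mul_left _ _ (rpow_pos_of_pos ht.1 _).ne', inv_div]
end

section
/- (Karamata's Theorem at ∞) Let f be regularly varying at ∞ with index ρ and locally bounded on [A,∞). If j < -(ρ+1), then ∫_t^∞ ξ^j f(ξ) dξ < ∞ for large t and lim_{t→∞} t^{j+1} f(t) / ∫_t^∞ ξ^j f(ξ) dξ = -(j + ρ + 1). -/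
/-!
Egorov's theorem makes the convergence `f (ξ * t) / f t → ξ ^ ρ` uniform off small sets.
Comparing the large good sets for `t` and for `r * t` shows that `f (r * t) / f t` stays bounded
for `r ∈ [1, 2]` and large `t`; iterating the doubling estimate `f (2 * t) / f t < 2 ^ p` then
gives Potter's bound `f (s * t) / f t ≤ C * s ^ p` for `s ≥ 1`, any `p > ρ`.
After substituting `ξ = s * t`, the ratio `t ^ (j + 1) * f t / ∫_t^∞ ξ ^ j * f ξ` is the
reciprocal of `∫_1^∞ s ^ j * f (s * t) / f t`, and Potter's bound with `j + p < -1` lets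
dominated convergence pass to `∫_1^∞ s ^ (j + ρ) = -1 / (j + ρ + 1)`.
-/

open Filter Set MeasureTheory Topology Pointwise

def RegularlyVarying (f : ℝ → ℝ) (ρ : ℝ) : Prop :=
  ∀ ξ : ℝ, 0 < ξ → Tendsto (fun t => f (ξ * t) / f t) atTop (𝓝 (ξ ^ ρ))

theorem Real.rpow_mem_uIcc_of_mem_Icc {a b v : ℝ} (ρ : ℝ) (ha : 0 < a) (hv : v ∈ Icc a b) :
    v ^ ρ ∈ uIcc (a ^ ρ) (b ^ ρ) := by
  have hpos : Icc a b ⊆ Ioi 0 := fun x hx => ha.trans_le hx.1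
  rcases le_total 0 ρ with hρ | hρ
  · exact Icc_subset_uIcc (((Real.monotoneOn_rpow_Ici_of_exponent_nonneg hρ).mono
      (hpos.trans Ioi_subset_Ici_self)).mapsTo_Icc hv)
  · exact Icc_subset_uIcc'
      (((Real.antitoneOn_rpow_Ioi_of_exponent_nonpos hρ).mono hpos).mapsTo_Icc hv)

theorem Real.rpow_le_two_rpow_abs_mul_rpow {x s : ℝ} (p : ℝ) (hx : 0 < x) (hxs : x ≤ s)
    (hs : s ≤ 2 * x) : x ^ p ≤ 2 ^ |p| * s ^ p := by
  rcases le_total 0 p with hp | hp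
  · calc x ^ p ≤ s ^ p := Real.rpow_le_rpow hx.le hxs hp
      _ ≤ 2 ^ |p| * s ^ p :=
        le_mul_of_one_le_left (Real.rpow_nonneg (hx.le.trans hxs) p)
          (Real.one_le_rpow one_le_two (abs_nonneg p))
  · calc x ^ p = 2 ^ (-p) * (2 * x) ^ p := by
          rw [Real.mul_rpow zero_le_two hx.le, Real.rpow_neg zero_le_two,
            inv_mul_cancel_left₀ (by positivity)]
      _ ≤ 2 ^ |p| * s ^ p := by
          rw [abs_of_nonpos hp]
          exact mul_le_mul_of_nonneg_left (Real.rpow_le_rpow_of_nonpos (hx.trans_le hxs) hs hp)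
            (by positivity)

theorem div_le_pow_of_forall_ge {g : ℝ → ℝ} {c q T x : ℝ} (hc : 1 ≤ c) (hT : 0 ≤ T)
    (hpos : ∀ y ≥ T, 0 < g y) (hstep : ∀ y ≥ T, g (c * y) / g y ≤ q) (hx : T ≤ x)
    (n : ℕ) :
    g (c ^ n * x) / g x ≤ q ^ n := by
  induction n with
  | zero => simp [(hpos x hx).ne']
  | succ n ih =>
    have hy : T ≤ c ^ n * x := hx.trans (le_mul_of_one_le_left (hT.trans hx) (one_le_pow₀ hc))
    have hq : 0 ≤ q := (div_pos (hpos _ (hy.trans (le_mul_of_one_le_left (hT.trans hy) hc)))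
      (hpos _ hy)).le.trans (hstep _ hy)
    calc g (c ^ (n + 1) * x) / g x
        = g (c * (c ^ n * x)) / g (c ^ n * x) * (g (c ^ n * x) / g x) := by
          rw [div_mul_div_cancel₀ (hpos _ hy).ne', pow_succ', mul_assoc]
      _ ≤ q * q ^ n := mul_le_mul (hstep _ hy) ih (div_pos (hpos _ hy) (hpos x hx)).le hq
      _ = q ^ (n + 1) := (pow_succ' q n).symm

theorem rpow_mul_div_eqOn (f : ℝ → ℝ) (j : ℝ) {t : ℝ} (ht : 0 < t) :
    EqOn (fun s => s ^ j * (f (s * t) / f t))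
      (fun s => (t ^ j * f t)⁻¹ * ((s * t) ^ j * f (s * t))) (Ioi 0) := by
  intro s hs
  simp only [Real.mul_rpow (le_of_lt hs) ht.le, mul_inv, div_eq_mul_inv]
  field_simp [(Real.rpow_pos_of_pos ht j).ne']

theorem integral_Ioi_rpow_mul_eq (f : ℝ → ℝ) (j : ℝ) {t : ℝ} (ht : 0 < t)
    (hft : f t ≠ 0) :
    ∫ ξ in Ioi t, ξ ^ j * f ξ =
      t ^ (j + 1) * f t * ∫ s in Ioi 1, s ^ j * (f (s * t) / f t) := by
  rw [setIntegral_congr_fun measurableSet_Ioi ((rpow_mul_div_eqOn f j ht).mono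
      (Ioi_subset_Ioi zero_le_one)), integral_const_mul,
    integral_comp_mul_right_Ioi (fun ξ => ξ ^ j * f ξ) 1 ht, one_mul, smul_eq_mul,
    Real.rpow_add_one ht.ne']
  field_simp [(Real.rpow_pos_of_pos ht j).ne']

theorem integrableOn_Ioi_rpow_mul_iff (f : ℝ → ℝ) (j : ℝ) {t : ℝ} (ht : 0 < t)
    (hft : f t ≠ 0) :
    IntegrableOn (fun ξ => ξ ^ j * f ξ) (Ioi t) ↔
      IntegrableOn (fun s => s ^ j * (f (s * t) / f t)) (Ioi 1) := by
  rw [integrableOn_congr_fun ((rpow_mul_div_eqOn f j ht).mono (Ioi_subset_Ioi zero_le_one))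
      measurableSet_Ioi, IntegrableOn, IntegrableOn,
    integrable_const_mul_iff (isUnit_iff_ne_zero.2 (inv_ne_zero (mul_ne_zero
      (Real.rpow_pos_of_pos ht j).ne' hft)))]
  simpa only [IntegrableOn, one_mul] using
    (integrableOn_Ioi_comp_mul_right_iff (fun ξ => ξ ^ j * f ξ) 1 ht).symm

namespace RegularlyVarying

variable {f : ℝ → ℝ} {ρ : ℝ}

theorem exists_large_set_div_mem_Icc (hf : Measurable f) (hRV : RegularlyVarying f ρ)
    {t : ℕ → ℝ} (ht : Tendsto t atTop atTop) {a b ε : ℝ} (ha : 0 < a) (hab : a ≤ b)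
    (hε : 0 < ε) :
    ∃ S ⊆ Icc a b, MeasurableSet S ∧ ENNReal.ofReal (b - a - ε) ≤ volume S ∧
      ∃ m M, 0 < m ∧ ∀ᶠ n in atTop, ∀ v ∈ S, f (v * t n) / f (t n) ∈ Icc m M := by
  obtain ⟨e, -, he, hvol, hunif⟩ := tendstoUniformlyOn_of_ae_tendsto (μ := volume)
    (f := fun n v => f (v * t n) / f (t n)) (g := fun v => v ^ ρ)
    (fun n => ((hf.comp (measurable_mul_const _)).div_const _).stronglyMeasurable)
    (by fun_prop : Measurable fun v : ℝ => v ^ ρ).stronglyMeasurable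
    measurableSet_Icc (by simp [Real.volume_Icc])
    (ae_of_all _ fun v hv => (hRV v (ha.trans_le hv.1)).comp ht) hε
  set m := (a ^ ρ ⊓ b ^ ρ) / 2 with hm_def
  have hm : 0 < m := half_pos (lt_inf_iff.2 ⟨Real.rpow_pos_of_pos ha ρ,
    Real.rpow_pos_of_pos (ha.trans_le hab) ρ⟩)
  refine ⟨Icc a b \ e, sdiff_subset, measurableSet_Icc.diff he, ?_,
    m, a ^ ρ ⊔ b ^ ρ + m, hm, ?_⟩
  · calc ENNReal.ofReal (b - a - ε) = ENNReal.ofReal (b - a) - ENNReal.ofReal ε :=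
          ENNReal.ofReal_sub _ hε.le
      _ ≤ volume (Icc a b) - volume e := by rw [Real.volume_Icc]; gcongr
      _ ≤ volume (Icc a b \ e) := le_measure_sdiff
  · filter_upwards [Metric.tendstoUniformlyOn_iff.1 hunif m hm] with n hn v hv
    have hclose := abs_sub_lt_iff.1 (hn v hv)
    obtain ⟨hlo, hhi⟩ := Real.rpow_mem_uIcc_of_mem_Icc ρ ha hv.1
    constructor <;> linarith [inf_le_left (a := a ^ ρ) (b := b ^ ρ)]

theorem exists_eventually_div_le_of_tendsto (hf : Measurable f) (hRV : RegularlyVarying f ρ)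
    {t r : ℕ → ℝ} (ht : Tendsto t atTop atTop) (hr : ∀ n, r n ∈ Icc (1 : ℝ) 2) :
    ∃ K, ∀ᶠ n in atTop, f (r n * t n) / f (t n) ≤ K := by
  have hu : Tendsto (fun n => r n * t n) atTop atTop := tendsto_atTop_mono'
    _ ((ht.eventually_ge_atTop 0).mono fun n hn => le_mul_of_one_le_left hn (hr n).1) ht
  obtain ⟨S, hS, -, hvolS, m, M, hm, hSb⟩ :=
    hRV.exists_large_set_div_mem_Icc hf ht one_pos (by norm_num : (1 : ℝ) ≤ 4)
      (by norm_num : (0 : ℝ) < 1 / 4)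
  obtain ⟨S', hS', hS'm, hvolS', m', M', hm', hS'b⟩ :=
    hRV.exists_large_set_div_mem_Icc hf hu one_pos one_le_two (by norm_num : (0 : ℝ) < 1 / 4)
  refine ⟨M / m', (hSb.and hS'b).mono fun n ⟨hn, hn'⟩ => ?_⟩
  -- The good sets have total measure `7 / 2 > 3`, so they cannot be disjoint inside `[1, 4]`.
  obtain ⟨v, hvS, w, hwS', hvw⟩ : (S ∩ r n • S').Nonempty := by
    refine nonempty_inter_of_measure_lt_add volume (hS'm.const_smul₀ _) hS ?_ ?_
    · rintro _ ⟨w, hw, rfl⟩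
      obtain ⟨hw1, hw2⟩ := hS' hw
      obtain ⟨hr1, hr2⟩ := hr n
      constructor <;> simp only [smul_eq_mul] <;> nlinarith
    · rw [Measure.addHaar_smul_of_nonneg volume (zero_le_one.trans (hr n).1), Module.finrank_self,
        pow_one]
      calc volume (Icc (1 : ℝ) 4)
          < ENNReal.ofReal (4 - 1 - 1 / 4) + ENNReal.ofReal (2 - 1 - 1 / 4) := by
            rw [Real.volume_Icc, ← ENNReal.ofReal_add (by norm_num) (by norm_num),
              ENNReal.ofReal_lt_ofReal_iff (by norm_num)]
            norm_num
        _ ≤ volume S + ENNReal.ofReal (r n) * volume S' := by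
            gcongr
            exact hvolS'.trans (le_mul_of_one_le_left bot_le (ENNReal.one_le_ofReal.2 (hr n).1))
  obtain ⟨hφ, hφM⟩ := hn v hvS
  obtain ⟨hχ, -⟩ := hn' w hwS'
  rw [show w * (r n * t n) = v * t n by subst hvw; simp only [smul_eq_mul]; ring] at hχ
  have hfv : f (v * t n) ≠ 0 := (div_ne_zero_iff.1 (hm.trans_le hφ).ne').1
  calc f (r n * t n) / f (t n)
      = (f (v * t n) / f (t n)) / (f (v * t n) / f (r n * t n)) :=
        (div_div_div_cancel_left' _ _ hfv).symm
    _ ≤ M / m' := div_le_div₀ (hm.le.trans (hφ.trans hφM)) hφM hm' hχ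

theorem exists_eventually_div_le_on_Icc (hf : Measurable f) (hRV : RegularlyVarying f ρ) :
    ∃ K, ∀ᶠ t in atTop, ∀ r ∈ Icc (1 : ℝ) 2, f (r * t) / f t ≤ K := by
  by_contra! hunbdd
  have hseq : ∀ n : ℕ, ∃ t ≥ (n : ℝ), ∃ r ∈ Icc (1 : ℝ) 2, n < f (r * t) / f t :=
    fun n => (hunbdd n).forall_exists_of_atTop n
  choose t ht r hr hlt using hseq
  obtain ⟨K, hK⟩ := hRV.exists_eventually_div_le_of_tendsto hf
    (tendsto_atTop_mono ht tendsto_natCast_atTop_atTop) hr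
  obtain ⟨n, hnK, hKn⟩ := (hK.and (tendsto_natCast_atTop_atTop.eventually_ge_atTop K)).exists
  linarith [hlt n]

theorem potter_bound (hf : Measurable f) (hRV : RegularlyVarying f ρ)
    (hpos : ∀ᶠ t in atTop, 0 < f t) {p : ℝ} (hp : ρ < p) :
    ∃ C, ∀ᶠ t in atTop, ∀ s, 1 ≤ s → f (s * t) / f t ≤ C * s ^ p := by
  obtain ⟨K, hK⟩ := hRV.exists_eventually_div_le_on_Icc hf
  have hdbl : ∀ᶠ t in atTop, f (2 * t) / f t ≤ 2 ^ p :=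
    ((hRV 2 two_pos).eventually_le_const ((Real.rpow_lt_rpow_left_iff one_lt_two).2 hp))
  obtain ⟨T, hT⟩ := eventually_atTop.1 (hK.and (hdbl.and (hpos.and (eventually_ge_atTop 0))))
  have hT0 : 0 ≤ T := (hT T le_rfl).2.2.2
  refine ⟨K * 2 ^ |p|, eventually_atTop.2 ⟨T, fun t ht s hs => ?_⟩⟩
  obtain ⟨n, hns, hsn⟩ := exists_nat_pow_near hs one_lt_two
  have hty : t ≤ 2 ^ n * t := le_mul_of_one_le_left (hT0.trans ht) (one_le_pow₀ one_le_two)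
  have hfy := (hT _ (ht.trans hty)).2.2.1
  have hyt : f (2 ^ n * t) / f t ≤ ((2 : ℝ) ^ n) ^ p := by
    rw [← Real.rpow_pow_comm zero_le_two]
    exact div_le_pow_of_forall_ge one_le_two hT0 (fun y hy => (hT y hy).2.2.1)
      (fun y hy => (hT y hy).2.1) ht n
  have hsy : f (s * t) / f (2 ^ n * t) ≤ K := by
    have hr : s / 2 ^ n ∈ Icc (1 : ℝ) 2 := by
      rw [mem_Icc, le_div_iff₀ (by positivity), div_le_iff₀ (by positivity), ← pow_succ']
      exact ⟨by linarith, hsn.le⟩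
    have := (hT _ (ht.trans hty)).1 _ hr
    rwa [← mul_assoc, div_mul_cancel₀ _ (by positivity)] at this
  have hfst := (hT _ (ht.trans (le_mul_of_one_le_left (hT0.trans ht) hs))).2.2.1
  have hK0 : 0 ≤ K := (div_pos hfst hfy).le.trans hsy
  calc f (s * t) / f t = f (s * t) / f (2 ^ n * t) * (f (2 ^ n * t) / f t) :=
        (div_mul_div_cancel₀ hfy.ne').symm
    _ ≤ K * ((2 : ℝ) ^ n) ^ p :=
        mul_le_mul hsy hyt (div_pos hfy (hT t ht).2.2.1).le hK0
    _ ≤ K * (2 ^ |p| * s ^ p) := by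
        gcongr
        exact Real.rpow_le_two_rpow_abs_mul_rpow p (by positivity) hns
          (by rw [pow_succ'] at hsn; linarith)
    _ = K * 2 ^ |p| * s ^ p := by ring

theorem exists_norm_rpow_mul_div_le (hf : Measurable f) (hRV : RegularlyVarying f ρ)
    (hpos : ∀ᶠ t in atTop, 0 < f t) {j : ℝ} (hj : j < -(ρ + 1)) :
    ∃ q C : ℝ, q < -1 ∧
      ∀ᶠ t in atTop, ∀ s, 1 ≤ s → ‖s ^ j * (f (s * t) / f t)‖ ≤ C * s ^ q := by
  obtain ⟨C, hC⟩ := hRV.potter_bound hf hpos (p := (ρ - j - 1) / 2) (by linarith)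
  obtain ⟨T, hT⟩ := eventually_atTop.1 hpos
  refine ⟨j + (ρ - j - 1) / 2, C, by linarith, ?_⟩
  filter_upwards [hC, eventually_ge_atTop (max T 0)] with t hCt ht s hs
  have hs0 : 0 < s := one_pos.trans_le hs
  have hft := hT t (le_of_max_le_left ht)
  have hfst := hT (s * t) ((le_of_max_le_left ht).trans
    (le_mul_of_one_le_left (le_of_max_le_right ht) hs))
  rw [Real.norm_eq_abs, abs_of_nonneg (by positivity), Real.rpow_add hs0, mul_comm C, mul_assoc]
  exact mul_le_mul_of_nonneg_left (mul_comm C _ ▸ hCt s hs) (by positivity)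

theorem eventually_integrableOn_rpow_mul_div (hf : Measurable f) (hRV : RegularlyVarying f ρ)
    (hpos : ∀ᶠ t in atTop, 0 < f t) {j : ℝ} (hj : j < -(ρ + 1)) :
    ∀ᶠ t in atTop, IntegrableOn (fun s => s ^ j * (f (s * t) / f t)) (Ioi 1) := by
  obtain ⟨q, C, hq, hbound⟩ := hRV.exists_norm_rpow_mul_div_le hf hpos hj
  filter_upwards [hbound] with t ht
  exact ((integrableOn_Ioi_rpow_of_lt hq one_pos).const_mul C).mono' (by fun_prop)
    ((ae_restrict_iff' measurableSet_Ioi).2 (ae_of_all _ fun s hs => ht s (le_of_lt hs)))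

theorem tendsto_integral_rpow_mul_div (hf : Measurable f) (hRV : RegularlyVarying f ρ)
    (hpos : ∀ᶠ t in atTop, 0 < f t) {j : ℝ} (hj : j < -(ρ + 1)) :
    Tendsto (fun t => ∫ s in Ioi 1, s ^ j * (f (s * t) / f t)) atTop
      (𝓝 (-(j + ρ + 1))⁻¹) := by
  obtain ⟨q, C, hq, hbound⟩ := hRV.exists_norm_rpow_mul_div_le hf hpos hj
  have hlim : ∫ s in Ioi (1 : ℝ), s ^ (j + ρ) = (-(j + ρ + 1))⁻¹ := by
    rw [integral_Ioi_rpow_of_lt (by linarith) one_pos, Real.one_rpow, inv_neg, neg_div, one_div]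
  rw [← hlim]
  refine tendsto_integral_filter_of_dominated_convergence (fun s => C * s ^ q)
    (Eventually.of_forall fun t => by fun_prop)
    (hbound.mono fun t ht => (ae_restrict_iff' measurableSet_Ioi).2
      (ae_of_all _ fun s hs => ht s (le_of_lt hs)))
    ((integrableOn_Ioi_rpow_of_lt hq one_pos).const_mul C)
    ((ae_restrict_iff' measurableSet_Ioi).2 (ae_of_all _ fun s hs => ?_))
  have hs0 : 0 < s := one_pos.trans hs
  rw [Real.rpow_add hs0]
  exact (hRV s hs0).const_mul (s ^ j)

end RegularlyVarying

theorem karamata_at_infty_general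
    (A ρ j : ℝ) (f : ℝ → ℝ) (hfmeas : Measurable f)
    (hfpos : ∀ t ∈ Set.Ici A, 0 < f t)
    (hRV : ∀ ξ : ℝ, 0 < ξ →
        Tendsto (fun t => f (ξ * t) / f t) atTop (nhds (ξ ^ ρ)))
    (hj : j < -(ρ + 1)) :
    (∀ᶠ t in atTop, IntegrableOn (fun ξ => ξ ^ j * f ξ) (Set.Ioi t)) ∧
    Tendsto (fun t => t ^ (j + 1) * f t / ∫ ξ in Set.Ioi t, ξ ^ j * f ξ)
      atTop (nhds (-(j + ρ + 1))) := by
  have hpos : ∀ᶠ t in atTop, 0 < f t := eventually_atTop.2 ⟨A, hfpos⟩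
  have hreg : ∀ᶠ t in atTop, 0 < t ∧ f t ≠ 0 :=
    (eventually_gt_atTop 0).and (hpos.mono fun t ht => ht.ne')
  constructor
  · filter_upwards [hreg,
      RegularlyVarying.eventually_integrableOn_rpow_mul_div hfmeas hRV hpos hj]
      with t ⟨ht, hft⟩ hint
    exact (integrableOn_Ioi_rpow_mul_iff f j ht hft).2 hint
  · have hlim := (RegularlyVarying.tendsto_integral_rpow_mul_div hfmeas hRV hpos hj).inv₀
      (inv_ne_zero (by linarith))
    rw [inv_inv] at hlim
    refine hlim.congr' (hreg.mono fun t ⟨ht, hft⟩ => ?_)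
    dsimp only
    rw [integral_Ioi_rpow_mul_eq f j ht hft,
      div_mul_cancel_left₀ (mul_ne_zero (Real.rpow_pos_of_pos ht _).ne' hft)]

/-- Karamata's theorem at `∞` for `j < -(ρ+1)`. -/
theorem karamata_at_infty
    (A ρ j : ℝ) (f : ℝ → ℝ) (hfmeas : Measurable f)
    (hfpos : ∀ t ∈ Set.Ici A, 0 < f t)
    (hRV : ∀ ξ : ℝ, 0 < ξ →
        Tendsto (fun t => f (ξ * t) / f t) atTop (nhds (ξ ^ ρ)))
    (hlocbdd : ∀ b ∈ Set.Ici A, ∃ M : ℝ, ∀ t ∈ Set.Icc A b, f t ≤ M)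
    (hj : j < -(ρ + 1)) :
    (∀ᶠ t in atTop, IntegrableOn (fun ξ => ξ ^ j * f ξ) (Set.Ioi t)) ∧
    Tendsto (fun t => t ^ (j + 1) * f t / ∫ ξ in Set.Ioi t, ξ ^ j * f ξ)
      atTop (nhds (-(j + ρ + 1))) :=
  karamata_at_infty_general A ρ j f hfmeas hfpos hRV hj
end

section
/- If f is regularly varying at ∞ with index ρ, then lim_{t→∞} ln f(t) / ln t = ρ. -/
/-!
Put `h x = log f (eˣ) - ρ x`. Regular variation says exactly that `h (x + u) - h x → 0` for
every `u`, and the claim is that `h x / x → 0`. The pointwise limits are upgraded to uniform ones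
for `u ∈ [0, 1]` by the measure argument behind the uniform convergence theorem: by Egorov, for
`x` along a sequence the increments converge uniformly off a set of measure `≤ 1/4`, and since
two such sets, one of them translated, cannot cover `[1, 2]`, every increment `h (x + u) - h x`
splits as a difference of two uniformly small increments. Uniformly small increments on unit
steps make `h` grow at most like `ε x`.
-/

open Filter Set MeasureTheory Asymptotics

lemma exists_mem_Icc_notMem_and_sub_notMem_s4 {s t : Set ℝ} {a b : ℝ} (u : ℝ)
    (hst : volume s + volume t < ENNReal.ofReal (b - a)) :
    ∃ w ∈ Icc a b, w ∉ s ∧ w - u ∉ t := by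
  by_contra! hcover
  have hsub : Icc a b ⊆ s ∪ (fun w => w + -u) ⁻¹' t := fun w hw => by
    by_cases hws : w ∈ s
    · exact Or.inl hws
    · exact Or.inr (by simpa [sub_eq_add_neg] using hcover w hw hws)
  have := calc
    ENNReal.ofReal (b - a) = volume (Icc a b) := Real.volume_Icc.symm
    _ ≤ volume s + volume ((fun w => w + -u) ⁻¹' t) :=
      (measure_mono hsub).trans (measure_union_le _ _)
    _ = volume s + volume t := by rw [measure_preimage_add_right]
  exact this.not_gt hst

/-- The additive form of slow variation: `ℓ` is slowly varying iff `log ∘ ℓ ∘ exp` is. -/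
def IsAddSlowlyVarying (h : ℝ → ℝ) : Prop :=
  ∀ u : ℝ, Tendsto (fun x => h (x + u) - h x) atTop (nhds 0)

namespace IsAddSlowlyVarying

variable {h : ℝ → ℝ}

lemma exists_tendstoUniformlyOn_diff (hm : Measurable h) (hh : IsAddSlowlyVarying h)
    {x : ℕ → ℝ} (hx : Tendsto x atTop atTop) {s : Set ℝ} (hs : MeasurableSet s)
    (hs' : volume s ≠ ⊤) {δ : ℝ} (hδ : 0 < δ) :
    ∃ t, volume t ≤ ENNReal.ofReal δ ∧
      TendstoUniformlyOn (fun m v => h (x m + v) - h (x m)) 0 atTop (s \ t) := by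
  obtain ⟨t, -, -, ht, hunif⟩ := tendstoUniformlyOn_of_ae_tendsto (μ := volume)
    (fun m => ((hm.comp (measurable_const_add (x m))).sub_const _).stronglyMeasurable)
    stronglyMeasurable_const hs hs' (ae_of_all _ fun v _ => (hh v).comp hx) hδ
  exact ⟨t, ht, hunif⟩

/-- Sequential form of the uniform convergence theorem. -/
lemma tendsto_apply_add_sub_apply (hm : Measurable h) (hh : IsAddSlowlyVarying h)
    {x u : ℕ → ℝ} (hx : Tendsto x atTop atTop) (hu : ∀ m, u m ∈ Icc (0 : ℝ) 1) :
    Tendsto (fun m => h (x m + u m) - h (x m)) atTop (nhds 0) := by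
  have hy : Tendsto (fun m => x m + u m) atTop atTop :=
    tendsto_atTop_mono (fun m => le_add_of_nonneg_right (hu m).1) hx
  have hquarter : (0 : ℝ) < 1 / 4 := by norm_num
  obtain ⟨t₁, ht₁, hunif₁⟩ := hh.exists_tendstoUniformlyOn_diff hm hx (s := Icc 0 2)
    measurableSet_Icc (by simp [Real.volume_Icc]) hquarter
  obtain ⟨t₂, ht₂, hunif₂⟩ := hh.exists_tendstoUniformlyOn_diff hm hy (s := Icc 0 2)
    measurableSet_Icc (by simp [Real.volume_Icc]) hquarter
  have hsmall : volume t₁ + volume t₂ < ENNReal.ofReal (2 - 1) := by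
    refine (add_le_add ht₁ ht₂).trans_lt ?_
    rw [← ENNReal.ofReal_add hquarter.le hquarter.le]
    exact (ENNReal.ofReal_lt_ofReal_iff (by norm_num)).2 (by norm_num)
  rw [Metric.tendsto_nhds]
  intro ε hε
  filter_upwards [Metric.tendstoUniformlyOn_iff.1 hunif₁ (ε / 2) (by positivity),
    Metric.tendstoUniformlyOn_iff.1 hunif₂ (ε / 2) (by positivity)] with m h₁ h₂
  obtain ⟨w, ⟨hw1, hw2⟩, hwt₁, hwt₂⟩ := exists_mem_Icc_notMem_and_sub_notMem_s4 (u m) hsmall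
  have hx_w := h₁ w ⟨⟨by linarith, hw2⟩, hwt₁⟩
  have hy_w := h₂ (w - u m) ⟨⟨by linarith [(hu m).2], by linarith [(hu m).1]⟩, hwt₂⟩
  rw [show x m + u m + (w - u m) = x m + w by ring] at hy_w
  simp only [Pi.zero_apply, dist_zero_left, Real.norm_eq_abs, Real.dist_0_eq_abs] at hx_w hy_w ⊢
  calc |h (x m + u m) - h (x m)|
      ≤ |h (x m + w) - h (x m + u m)| + |h (x m + w) - h (x m)| := by
        rw [abs_sub_comm (h (x m + w))]; exact abs_sub_le _ _ _
    _ < ε / 2 + ε / 2 := add_lt_add hy_w hx_w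
    _ = ε := add_halves ε

/-- The uniform convergence theorem on `[0, 1]`. -/
lemma eventually_forall_Icc_abs_sub_le (hm : Measurable h) (hh : IsAddSlowlyVarying h)
    {ε : ℝ} (hε : 0 < ε) :
    ∀ᶠ x in atTop, ∀ u ∈ Icc (0 : ℝ) 1, |h (x + u) - h x| ≤ ε := by
  by_contra hc
  have hbad : ∀ m : ℕ, ∃ x : ℝ, (m : ℝ) ≤ x ∧ ∃ u ∈ Icc (0 : ℝ) 1, ε < |h (x + u) - h x| := by
    intro m
    obtain ⟨x, hmx, hx⟩ := frequently_atTop.1 (not_eventually.1 hc) m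
    push Not at hx
    exact ⟨x, hmx, hx⟩
  choose x hmx u hu hgt using hbad
  have hlim := hh.tendsto_apply_add_sub_apply hm
    (tendsto_atTop_mono hmx tendsto_natCast_atTop_atTop) hu
  obtain ⟨m, hm⟩ := (Metric.tendsto_nhds.1 hlim ε hε).exists
  rw [Real.dist_0_eq_abs] at hm
  exact (hgt m).not_gt hm

end IsAddSlowlyVarying

lemma abs_sub_le_mul_of_forall_Icc_abs_sub_le {h : ℝ → ℝ} {X ε : ℝ}
    (hX : ∀ x ≥ X, ∀ u ∈ Icc (0 : ℝ) 1, |h (x + u) - h x| ≤ ε) :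
    ∀ y ≥ X, |h y - h X| ≤ (y - X + 1) * ε := by
  have hε : 0 ≤ ε := by simpa using hX X le_rfl 0 ⟨le_rfl, zero_le_one⟩
  have hsteps : ∀ n : ℕ, ∀ y ∈ Icc X (X + n), |h y - h X| ≤ n * ε := by
    intro n
    induction n with
    | zero => intro y hy; simp [le_antisymm (by simpa using hy.2) hy.1]
    | succ n ih =>
      intro y ⟨hXy, hyn⟩
      push_cast at hyn ⊢
      rcases le_or_gt y (X + n) with hy | hy
      · linarith [ih y ⟨hXy, hy⟩]
      · have hstep := hX (X + n) (by linarith [n.cast_nonneg (α := ℝ)]) (y - (X + n))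
          ⟨by linarith, by linarith⟩
        rw [add_sub_cancel] at hstep
        calc |h y - h X| ≤ |h y - h (X + n)| + |h (X + n) - h X| := abs_sub_le _ _ _
          _ ≤ ε + n * ε :=
            add_le_add hstep (ih (X + n) ⟨by linarith [n.cast_nonneg (α := ℝ)], le_rfl⟩)
          _ = (n + 1) * ε := by ring
  intro y hy
  have hceil := Nat.ceil_lt_add_one (sub_nonneg.2 hy)
  calc |h y - h X| ≤ (⌈y - X⌉₊ : ℝ) * ε := hsteps _ y ⟨hy, by linarith [Nat.le_ceil (y - X)]⟩
    _ ≤ (y - X + 1) * ε := by gcongr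

lemma IsAddSlowlyVarying.isLittleO_id {h : ℝ → ℝ} (hm : Measurable h)
    (hh : IsAddSlowlyVarying h) : h =o[atTop] id := by
  refine isLittleO_iff.2 fun c hc => ?_
  obtain ⟨X, hX⟩ := eventually_atTop.1 (hh.eventually_forall_Icc_abs_sub_le hm (half_pos hc))
  have hgrowth := abs_sub_le_mul_of_forall_Icc_abs_sub_le hX
  filter_upwards [eventually_ge_atTop X, eventually_ge_atTop 0,
    eventually_ge_atTop (2 / c * |h X| + 1 - X)] with y hXy hy0 hy
  have hcy : c * (2 / c * |h X| + 1 - X) ≤ c * y := mul_le_mul_of_nonneg_left hy hc.le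
  rw [mul_sub, mul_add, ← mul_assoc, mul_div_cancel₀ _ hc.ne'] at hcy
  rw [Real.norm_eq_abs, id, Real.norm_eq_abs, abs_of_nonneg hy0]
  linarith [abs_sub_abs_le_abs_sub (h y) (h X), hgrowth y hXy]

lemma tendsto_log_comp_exp_add_sub {f : ℝ → ℝ} {ρ : ℝ} (hfpos : ∀ᶠ t in atTop, 0 < f t)
    (hRV : ∀ ξ : ℝ, 0 < ξ → Tendsto (fun t => f (ξ * t) / f t) atTop (nhds (ξ ^ ρ)))
    (u : ℝ) :
    Tendsto (fun x => Real.log (f (Real.exp (x + u))) - Real.log (f (Real.exp x)))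
      atTop (nhds (ρ * u)) := by
  have hlog := ((hRV _ (Real.exp_pos u)).comp Real.tendsto_exp_atTop).log
    (Real.rpow_pos_of_pos (Real.exp_pos u) ρ).ne'
  rw [Real.log_rpow (Real.exp_pos u), Real.log_exp] at hlog
  have hshift : Tendsto (fun x => Real.exp (x + u)) atTop atTop :=
    Real.tendsto_exp_atTop.comp (tendsto_atTop_add_const_right _ u tendsto_id)
  refine hlog.congr' ?_
  filter_upwards [Real.tendsto_exp_atTop.eventually hfpos, hshift.eventually hfpos] with x h₁ h₂
  rw [Function.comp_apply, ← Real.exp_add, add_comm u, Real.log_div h₂.ne' h₁.ne']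

/-- If `f` is regularly varying at `∞` with index `ρ`, then `log f t / log t → ρ`. -/
theorem log_div_log_tendsto_of_regularly_varying
    (ρ : ℝ) (f : ℝ → ℝ) (hfmeas : Measurable f)
    (hfpos : ∀ᶠ t in atTop, 0 < f t)
    (hRV : ∀ ξ : ℝ, 0 < ξ →
        Tendsto (fun t => f (ξ * t) / f t) atTop (nhds (ξ ^ ρ))) :
    Tendsto (fun t => Real.log (f t) / Real.log t) atTop (nhds ρ) := by
  set h : ℝ → ℝ := fun x => Real.log (f (Real.exp x)) - ρ * x
  have hm : Measurable h := by fun_prop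
  have hh : IsAddSlowlyVarying h := fun u => by
    have := (tendsto_log_comp_exp_add_sub hfpos hRV u).sub_const (ρ * u)
    rw [sub_self] at this
    exact this.congr fun x => by simp only [h]; ring
  have hlim := ((hh.isLittleO_id hm).tendsto_div_nhds_zero.comp Real.tendsto_log_atTop).add_const ρ
  rw [zero_add] at hlim
  refine hlim.congr' ?_
  filter_upwards [eventually_gt_atTop 1] with t ht
  have hlog := Real.log_pos ht
  simp only [Function.comp_apply, id, h, Real.exp_log (zero_lt_one.trans ht)]
  field_simp
  ring
end

section
/- (Uniform Convergence Theorem at 0) If L is slowly varying at 0, then for every compact set K ⊂ (0,∞), L(ξt)/L(t) → 1 as t → 0⁺ uniformly in ξ ∈ K. -/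
/-!
Writing `h x = log L (exp (-x))`, slow variation at `0` says `h (x + u) - h x → 0` as `x → ∞` for
each `u`, and uniformity in `ξ ∈ K` is uniformity in `u` on the bounded set `-log '' K`. For the
latter take `x n → ∞`, bounded `u n`, and `y n = x n + u n`. By Egorov, `w ↦ h (x n + w) - h (x n)`
and `v ↦ h (y n + v) - h (y n)` tend to `0` uniformly off sets of measure `≤ 1/2`; these cannot
cover `[-1, 1]` (one after translation by `u n`), so some `v n ∈ [-1, 1]` is good for both, and
`h (y n) - h (x n)` is the difference of the two values at the common point `x n + u n + v n`.
-/

open Filter Set MeasureTheory Topology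

theorem TendstoUniformlyOn.tendsto_apply_of_eventually_mem {ι α β : Type*} [UniformSpace β]
    {F : ι → α → β} {c : β} {p : Filter ι} {s : Set α} (h : TendstoUniformlyOn F (fun _ => c) p s)
    {w : ι → α} (hw : ∀ᶠ i in p, w i ∈ s) : Tendsto (fun i => F i (w i)) p (𝓝 c) :=
  (tendsto_prod_principal_iff.2 h).comp (tendsto_id.prodMk (tendsto_principal.2 hw))

theorem exists_mem_add_notMem_notMem {G : Type*} [AddGroup G] [MeasurableSpace G]
    [MeasurableAdd G] (μ : Measure G) [μ.IsAddLeftInvariant] {B s t : Set G}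
    (h : μ s + μ t < μ B) (u : G) : ∃ v ∈ B, u + v ∉ s ∧ v ∉ t := by
  by_contra! hcon
  have hB : B ⊆ (fun v => u + v) ⁻¹' s ∪ t := fun v hv => or_iff_not_imp_left.2 (hcon v hv)
  have := (measure_mono (μ := μ) hB).trans (measure_union_le _ _)
  rw [measure_preimage_add] at this
  exact this.not_gt h

section AdditiveUniformConvergence

variable {E : Type*} [NormedAddCommGroup E] {f : ℝ → E}

theorem exists_tendstoUniformlyOn_add_sub_diff (hf : StronglyMeasurable f)
    (h : ∀ u, Tendsto (fun x => f (x + u) - f x) atTop (𝓝 0)) {y : ℕ → ℝ}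
    (hy : Tendsto y atTop atTop) {s : Set ℝ} (hs : MeasurableSet s) (hs' : volume s ≠ ⊤)
    {ε : ℝ} (hε : 0 < ε) :
    ∃ t, volume t ≤ ENNReal.ofReal ε ∧
      TendstoUniformlyOn (fun n w => f (y n + w) - f (y n)) (fun _ => 0) atTop (s \ t) := by
  obtain ⟨t, -, -, ht, hunif⟩ := tendstoUniformlyOn_of_ae_tendsto
    (fun n => (hf.comp_measurable (measurable_const_add (y n))).sub stronglyMeasurable_const)
    stronglyMeasurable_const hs hs' (ae_of_all _ fun w _ => (h w).comp hy) hε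
  exact ⟨t, ht, hunif⟩

theorem tendsto_add_sub_of_tendsto (hf : StronglyMeasurable f)
    (h : ∀ u, Tendsto (fun x => f (x + u) - f x) atTop (𝓝 0)) {x u : ℕ → ℝ}
    (hx : Tendsto x atTop atTop) {a b : ℝ} (hu : ∀ᶠ n in atTop, u n ∈ Icc a b) :
    Tendsto (fun n => f (x n + u n) - f (x n)) atTop (𝓝 0) := by
  have hxu : Tendsto (fun n => x n + u n) atTop atTop := by
    simpa only [add_comm] using tendsto_atTop_add_left_of_le' _ a (hu.mono fun n hn => hn.1) hx
  obtain ⟨t₁, ht₁, hunif₁⟩ := exists_tendstoUniformlyOn_add_sub_diff hf h hx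
    (measurableSet_Icc (a := a - 1) (b := b + 1)) measure_Icc_lt_top.ne one_half_pos
  obtain ⟨t₂, ht₂, hunif₂⟩ := exists_tendstoUniformlyOn_add_sub_diff hf h hxu
    (measurableSet_Icc (a := -1) (b := 1)) measure_Icc_lt_top.ne one_half_pos
  have hsmall : volume t₁ + volume t₂ < volume (Icc (-1 : ℝ) 1) := by
    calc volume t₁ + volume t₂ ≤ ENNReal.ofReal (1 / 2) + ENNReal.ofReal (1 / 2) :=
          add_le_add ht₁ ht₂
      _ = ENNReal.ofReal 1 := by rw [← ENNReal.ofReal_add] <;> norm_num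
      _ < volume (Icc (-1 : ℝ) 1) := by rw [Real.volume_Icc]; norm_num
  choose v hv hv₁ hv₂ using fun n => exists_mem_add_notMem_notMem volume hsmall (u n)
  have h₁ := hunif₁.tendsto_apply_of_eventually_mem (w := fun n => u n + v n) <|
    hu.mono fun n hn => ⟨⟨by linarith [hn.1, (hv n).1], by linarith [hn.2, (hv n).2]⟩, hv₁ n⟩
  have h₂ := hunif₂.tendsto_apply_of_eventually_mem (.of_forall fun n => ⟨hv n, hv₂ n⟩)
  simpa [add_assoc] using h₁.sub h₂

theorem tendstoUniformlyOn_add_sub_of_tendsto (hf : StronglyMeasurable f)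
    (h : ∀ u, Tendsto (fun x => f (x + u) - f x) atTop (𝓝 0)) {K : Set ℝ}
    (hK : Bornology.IsBounded K) :
    TendstoUniformlyOn (fun x u => f (x + u) - f x) (fun _ => 0) atTop K := by
  obtain ⟨⟨a, ha⟩, ⟨b, hb⟩⟩ := isBounded_iff_bddBelow_bddAbove.1 hK
  rw [← tendsto_prod_principal_iff, tendsto_iff_seq_tendsto]
  intro q hq
  have hu : ∀ᶠ n in atTop, (q n).2 ∈ K := tendsto_principal.1 (tendsto_snd.comp hq)
  exact tendsto_add_sub_of_tendsto hf h (tendsto_fst.comp hq)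
    (hu.mono fun n hn => ⟨ha hn, hb hn⟩)

end AdditiveUniformConvergence

theorem tendsto_snd_mul_fst_nhdsGT_zero {K : Set ℝ} (hK0 : K ⊆ Ioi 0) (hK : BddAbove K) :
    Tendsto (fun q : ℝ × ℝ => q.2 * q.1) (𝓝[>] 0 ×ˢ 𝓟 K) (𝓝[>] 0) := by
  obtain ⟨b, hb⟩ := hK
  have hmem : ∀ᶠ q : ℝ × ℝ in 𝓝[>] 0 ×ˢ 𝓟 K, q.2 ∈ K :=
    tendsto_snd.eventually (mem_principal_self K)
  have hpos : ∀ᶠ q : ℝ × ℝ in 𝓝[>] 0 ×ˢ 𝓟 K, 0 < q.1 :=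
    tendsto_fst.eventually self_mem_nhdsWithin
  refine tendsto_nhdsWithin_iff.2 ⟨?_, ?_⟩
  · refine isBoundedUnder_le_mul_tendsto_zero (isBoundedUnder_of_eventually_le (a := b) ?_)
      (tendsto_nhdsWithin_of_tendsto_nhds tendsto_id |>.comp tendsto_fst)
    filter_upwards [hmem] with q hq
    simpa [abs_of_pos (mem_Ioi.1 (hK0 hq))] using hb hq
  · filter_upwards [hmem, hpos] with q hq hq₁ using mul_pos (hK0 hq) hq₁

noncomputable def logExpNeg (L : ℝ → ℝ) (x : ℝ) : ℝ := Real.log (L (Real.exp (-x)))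

section LogExpNeg

variable {L : ℝ → ℝ}

theorem measurable_logExpNeg (hL : Measurable L) : Measurable (logExpNeg L) :=
  Real.measurable_log.comp (hL.comp (Real.measurable_exp.comp measurable_neg))

theorem logExpNeg_neg_log {t : ℝ} (ht : 0 < t) : logExpNeg L (-Real.log t) = Real.log (L t) := by
  rw [logExpNeg, neg_neg, Real.exp_log ht]

theorem logExpNeg_add_sub {t ξ : ℝ} (ht : 0 < t) (hξ : 0 < ξ) (hLt : 0 < L t)
    (hLξt : 0 < L (ξ * t)) :
    logExpNeg L (-Real.log t + -Real.log ξ) - logExpNeg L (-Real.log t) =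
      Real.log (L (ξ * t) / L t) := by
  rw [← neg_add, ← Real.log_mul ht.ne' hξ.ne', logExpNeg_neg_log (mul_pos ht hξ),
    logExpNeg_neg_log ht, Real.log_div hLξt.ne' hLt.ne', mul_comm]

theorem tendsto_logExpNeg_add_sub (hL : ∀ᶠ t in 𝓝[>] 0, 0 < L t)
    (hSV : ∀ ξ : ℝ, 0 < ξ → Tendsto (fun t => L (ξ * t) / L t) (𝓝[>] 0) (𝓝 1)) (u : ℝ) :
    Tendsto (fun x => logExpNeg L (x + u) - logExpNeg L x) atTop (𝓝 0) := by
  have hexp : Tendsto (fun x => Real.exp (-x)) atTop (𝓝[>] 0) :=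
    Real.tendsto_exp_atBot_nhdsGT.comp tendsto_neg_atTop_atBot
  have hlog := (Real.continuousAt_log one_ne_zero).tendsto.comp
    ((hSV _ (Real.exp_pos (-u))).comp hexp)
  rw [Real.log_one] at hlog
  refine hlog.congr' ?_
  filter_upwards [hexp.eventually hL,
    (hexp.comp (tendsto_atTop_add_const_right _ u tendsto_id)).eventually hL] with x hx hxu
  have := logExpNeg_add_sub (Real.exp_pos (-x)) (Real.exp_pos (-u)) hx
    (by rwa [← Real.exp_add, ← neg_add, add_comm])
  simpa only [Real.log_exp, neg_neg, Function.comp_apply] using this.symm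

end LogExpNeg

/-- Uniform Convergence Theorem for slowly varying functions at `0`. -/
theorem uniform_convergence_slowly_varying_at_zero
    (c : ℝ) (hc : 0 < c) (L : ℝ → ℝ) (hLmeas : Measurable L)
    (hLpos : ∀ t ∈ Set.Ioc 0 c, 0 < L t)
    (hSV : ∀ ξ : ℝ, 0 < ξ →
        Tendsto (fun t => L (ξ * t) / L t) (nhdsWithin 0 (Set.Ioi 0)) (nhds 1)) :
    ∀ K : Set ℝ, IsCompact K → K ⊆ Set.Ioi 0 →
      TendstoUniformlyOn (fun t ξ => L (ξ * t) / L t) (fun _ => 1)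
        (nhdsWithin 0 (Set.Ioi 0)) K := by
  intro K hK hK0
  have hL : ∀ᶠ t in 𝓝[>] 0, 0 < L t := eventually_of_mem (Ioc_mem_nhdsGT hc) hLpos
  have hlogK : Bornology.IsBounded ((fun ξ => -Real.log ξ) '' K) :=
    (hK.image_of_continuousOn (Real.continuousOn_log.mono fun ξ hξ => (hK0 hξ).ne').neg).isBounded
  have hadd := tendsto_prod_principal_iff.2 <| tendstoUniformlyOn_add_sub_of_tendsto
    (measurable_logExpNeg hLmeas).stronglyMeasurable (tendsto_logExpNeg_add_sub hL hSV) hlogK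
  have hlog : Tendsto (fun q : ℝ × ℝ => (-Real.log q.1, -Real.log q.2)) (𝓝[>] 0 ×ˢ 𝓟 K)
      (atTop ×ˢ 𝓟 ((fun ξ => -Real.log ξ) '' K)) :=
    (tendsto_neg_atBot_atTop.comp Real.tendsto_log_nhdsGT_zero).prodMap
      (tendsto_principal_principal.2 fun ξ hξ => mem_image_of_mem _ hξ)
  have hexp := (Real.continuous_exp.tendsto 0).comp (hadd.comp hlog)
  rw [Real.exp_zero] at hexp
  rw [← tendsto_prod_principal_iff]
  refine hexp.congr' ?_
  filter_upwards [tendsto_fst.eventually hL,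
    (tendsto_snd_mul_fst_nhdsGT_zero hK0 hK.bddAbove).eventually hL,
    tendsto_fst.eventually self_mem_nhdsWithin, tendsto_snd.eventually (mem_principal_self K)]
    with ⟨t, ξ⟩ hLt hLξt ht hξ
  show Real.exp (logExpNeg L (-Real.log t + -Real.log ξ) - logExpNeg L (-Real.log t)) =
    L (ξ * t) / L t
  rw [logExpNeg_add_sub ht (hK0 hξ) hLt hLξt, Real.exp_log (div_pos hLξt hLt)]
end
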